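/- arXiv:1901.02822 — 8 statements merged into one kernel-verified Lean document; each statement's English description precedes it below -/
import Mathlib

section
/- Let I be a normal ideal on 𝒫(λ) and δ ≤ λ a cardinal. If there is no I-positive set A such that I↾A is δ⁺-saturated, then I is (2,δ)-regular, i.e., every sequence ⟨A_α : α < δ⟩ of I-positive sets has a refinement ⟨D_α : α < δ⟩ of pairwise disjoint I-positive sets with D_α ⊆ A_α. -/
open Cardinal Set

/-- `I` is a (nonprincipal, proper) ideal on the set `Z` of points of type `P`. -/
structure IdealOn {P : Type*} (Z : Set P) (I : Set (Set P)) : Prop where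
  mono : ∀ {A B : Set P}, A ⊆ B → B ∈ I → A ∈ I
  union : ∀ {A B : Set P}, A ∈ I → B ∈ I → A ∪ B ∈ I
  subset_Z : ∀ A ∈ I, A ⊆ Z
  nonprincipal : ∀ z ∈ Z, {z} ∈ I
  proper : Z ∉ I

/-- `A` is an `I`-positive subset of `Z`. -/
def Pos {P : Type*} (Z : Set P) (I : Set (Set P)) (A : Set P) : Prop := A ⊆ Z ∧ A ∉ I

/-- The restricted ideal `I ↾ A = {B : B ∩ A ∈ I}`. -/
def restrict {P : Type*} (I : Set (Set P)) (A : Set P) : Set (Set P) := {B | B ∩ A ∈ I}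

/-- The restricted ideal `I ↾ A`, as an ideal on `Z` (members required to be `⊆ Z`). -/
def restrictOn {P : Type*} (Z : Set P) (I : Set (Set P)) (A : Set P) : Set (Set P) :=
  {B | B ⊆ Z ∧ B ∩ A ∈ I}

/-- `I` is `κ`-complete: closed under unions of length `< κ`. -/
def Complete {P : Type*} (I : Set (Set P)) (κ : Cardinal.{0}) : Prop :=
  ∀ (o : Ordinal.{0}) (f : Ordinal.{0} → Set P), o < κ.ord → (∀ i < o, f i ∈ I) →
    (⋃ i ∈ Set.Iio o, f i) ∈ I

/-- `I` is `δ`-saturated: there is no `δ`-sequence of `I`-positive sets that are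
pairwise almost disjoint modulo `I`. -/
def Saturated {P : Type*} (Z : Set P) (I : Set (Set P)) (δ : Cardinal.{0}) : Prop :=
  ¬ ∃ f : Ordinal.{0} → Set P, (∀ i < δ.ord, Pos Z I (f i)) ∧
      ∀ i j, i < δ.ord → j < δ.ord → i ≠ j → f i ∩ f j ∈ I

/-- The set `x` of ordinals has order type `a`. -/
def HasOtype (x : Set Ordinal.{0}) (a : Ordinal.{0}) : Prop :=
  Nonempty ((Subrel ((· < ·) : Ordinal → Ordinal → Prop) x) ≃r
    (Subrel ((· < ·) : Ordinal → Ordinal → Prop) (Set.Iio a)))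

/-- The set `x` of ordinals has order type at least `a`. -/
def OtypeGE (x : Set Ordinal.{0}) (a : Ordinal.{0}) : Prop :=
  Nonempty ((Subrel ((· < ·) : Ordinal → Ordinal → Prop) (Set.Iio a)) ↪r
    (Subrel ((· < ·) : Ordinal → Ordinal → Prop) x))

/-- `I` is `(a,b)`-regular: every `b`-sequence of positive sets has a positive refinement
with empty intersections along index sets of order type `a`. -/
def Regular2 {P : Type*} (Z : Set P) (I : Set (Set P)) (a b : Ordinal.{0}) : Prop :=
  ∀ A : Ordinal.{0} → Set P, (∀ i < b, Pos Z I (A i)) →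
    ∃ B : Ordinal.{0} → Set P,
      (∀ i < b, B i ⊆ A i ∧ Pos Z I (B i)) ∧
      ∀ x : Set Ordinal.{0}, x ⊆ Set.Iio b → HasOtype x a → ⋂ i ∈ x, B i = ∅

/-- `I` is `(a,b,c)`-regular: every `c`-sequence of positive sets has a positive refinement
whose intersections along index sets of order type `b` have cardinality at most `a`. -/
def Regular3 {P : Type u} (Z : Set P) (I : Set (Set P)) (a : Cardinal.{u}) (b c : Ordinal.{0}) :
    Prop :=
  ∀ A : Ordinal.{0} → Set P, (∀ i < c, Pos Z I (A i)) →
    ∃ B : Ordinal.{0} → Set P,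
      (∀ i < c, B i ⊆ A i ∧ Pos Z I (B i)) ∧
      ∀ x : Set Ordinal.{0}, x ⊆ Set.Iio c → HasOtype x b → #↥(⋂ i ∈ x, B i) ≤ a

/-- Normality of an ideal on `Z ⊆ 𝒫(lam)` (points are sets of ordinals `< lam`):
each `x̂ = {z : x ∈ z}` is measure one, and every regressive function on a positive
set is constant on a positive set. -/
structure NormalP (lam : Ordinal.{0}) (Z : Set (Set Ordinal.{0}))
    (I : Set (Set (Set Ordinal.{0}))) : Prop where
  hat : ∀ x < lam, {z ∈ Z | x ∉ z} ∈ I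
  regress : ∀ (A : Set (Set Ordinal.{0})) (f : Set Ordinal.{0} → Ordinal.{0}),
    Pos Z I A → (∀ z ∈ A, f z ∈ z) →
    ∃ x, ∃ B ⊆ A, Pos Z I B ∧ ∀ z ∈ B, f z = x

/-- Normality of an ideal on `Z ⊆ 𝒫(X)` for an abstract set `X`. -/
structure NormalOn {X : Type*} (Z : Set (Set X)) (I : Set (Set (Set X))) : Prop where
  hat : ∀ x : X, {z ∈ Z | x ∉ z} ∈ I
  regress : ∀ (A : Set (Set X)) (f : Set X → X),
    Pos Z I A → (∀ z ∈ A, f z ∈ z) →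
    ∃ x, ∃ B ⊆ A, Pos Z I B ∧ ∀ z ∈ B, f z = x

/-- `𝒫_κ(lam)`, as the collection of sets of ordinals below `lam` of size `< κ`. -/
def Pkl (κ : Cardinal.{0}) (lam : Ordinal.{0}) : Set (Set Ordinal.{0}) :=
  {z | z ⊆ Set.Iio lam ∧ #↥z < Cardinal.lift.{1} κ}
namespace Stmt1Aux

noncomputable section

open scoped Classical

abbrev Pt : Type 1 := Set Ordinal.{0}

variable (ZZ : Set Pt) (II : Set (Set Pt)) (dd : Cardinal.{0}) (AA : Ordinal.{0} → Set Pt)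

def sOrd : Ordinal.{0} := (Order.succ dd).ord

def PhiSpec (C : Set Pt) (fB : Set (Set Pt) × (Ordinal.{0} → Set Pt)) : Prop :=
  (∀ F ∈ fB.1, F ⊆ C ∧ F ⊆ ZZ ∧ F ∉ II) ∧
  (∀ F ∈ fB.1, ∀ G ∈ fB.1, F ≠ G → F ∩ G ∈ II) ∧
  (∀ X : Set Pt, X ⊆ C → X ⊆ ZZ → X ∉ II → ∃ G ∈ fB.1, X ∩ G ∉ II) ∧
  (∀ i, i < sOrd dd → fB.2 i ∈ fB.1) ∧
  (∀ i j, i < sOrd dd → j < sOrd dd → i ≠ j → fB.2 i ∩ fB.2 j ∈ II)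

def Phi (C : Set Pt) : Set (Set Pt) × (Ordinal.{0} → Set Pt) :=
  if h : ∃ fB, PhiSpec ZZ II dd C fB then h.choose else (∅, fun _ => ∅)

theorem phi_spec (hI : IdealOn ZZ II)
    (hnosat : ∀ A, Pos ZZ II A → ¬ Saturated ZZ (restrict II A) (Order.succ dd))
    {C : Set Pt} (hC1 : C ⊆ ZZ) (hC2 : C ∉ II) :
    PhiSpec ZZ II dd C (Phi ZZ II dd C) := by
  have hex : ∃ fB, PhiSpec ZZ II dd C fB := by
    obtain ⟨f, hfpos, hfad⟩ := not_not.mp (hnosat C ⟨hC1, hC2⟩)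
    set B : Ordinal.{0} → Set Pt := fun i => f i ∩ C with hBdef
    have hBsub : ∀ i, B i ⊆ C := fun i => inter_subset_right
    have hBZ : ∀ i, i < sOrd dd → B i ⊆ ZZ := fun i hi z hz => (hfpos i hi).1 hz.1
    have hBnotin : ∀ i, i < sOrd dd → B i ∉ II := fun i hi h => (hfpos i hi).2 h
    have hBad : ∀ i j, i < sOrd dd → j < sOrd dd → i ≠ j → B i ∩ B j ∈ II := by
      intro i j hi hj hij
      apply hI.mono ?_ (hfad i j hi hj hij)
      intro z hz
      exact ⟨⟨hz.1.1, hz.2.1⟩, hz.1.2⟩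
    set F0 : Set (Set Pt) := {X | ∃ i, i < sOrd dd ∧ X = B i} with hF0
    set S : Set (Set (Set Pt)) :=
      {𝒻 | (∀ F ∈ 𝒻, F ⊆ C ∧ F ⊆ ZZ ∧ F ∉ II) ∧
        (∀ F ∈ 𝒻, ∀ G ∈ 𝒻, F ≠ G → F ∩ G ∈ II)} with hS
    have hF0S : F0 ∈ S := by
      constructor
      · rintro F ⟨i, hi, rfl⟩; exact ⟨hBsub i, hBZ i hi, hBnotin i hi⟩
      · rintro F ⟨i, hi, rfl⟩ G ⟨j, hj, rfl⟩ hne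
        exact hBad i j hi hj (by rintro rfl; exact hne rfl)
    have hchainU : ∀ c ⊆ S, IsChain (· ⊆ ·) c → c.Nonempty → ∃ ub ∈ S, ∀ s ∈ c, s ⊆ ub := by
      intro c hcS hchain hcne
      refine ⟨⋃₀ c, ⟨?_, ?_⟩, fun s hs => subset_sUnion_of_mem hs⟩
      · rintro F ⟨t, htc, hFt⟩; exact (hcS htc).1 F hFt
      · rintro F ⟨t, htc, hFt⟩ G ⟨u, huc, hGu⟩ hne
        rcases hchain.total htc huc with h | h
        · exact (hcS huc).2 F (h hFt) G hGu hne
        · exact (hcS htc).2 F hFt G (h hGu) hne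
    obtain ⟨m, hF0m, hmax⟩ := zorn_subset_nonempty S hchainU F0 hF0S
    refine ⟨(m, B), hmax.1.1, hmax.1.2, ?_, ?_, hBad⟩
    · intro X hXC hXZ hXI
      by_cases hXm : X ∈ m
      · exact ⟨X, hXm, by rwa [inter_self]⟩
      by_contra hno
      push_neg at hno
      simp only [not_not] at hno
      have hins : insert X m ∈ S := by
        constructor
        · intro F hF
          rcases mem_insert_iff.mp hF with hFX | hF
          · rw [hFX]; exact ⟨hXC, hXZ, hXI⟩
          · exact hmax.1.1 F hF
        · intro F hF G hG hne
          rcases mem_insert_iff.mp hF with hFX | hF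
          · rcases mem_insert_iff.mp hG with hGX | hG
            · exact absurd (hFX.trans hGX.symm) hne
            · rw [hFX]; exact hno G hG
          · rcases mem_insert_iff.mp hG with hGX | hG
            · rw [hGX, inter_comm]; exact hno F hF
            · exact hmax.1.2 F hF G hG hne
      have hsub : insert X m ⊆ m := hmax.2 hins (subset_insert X m)
      exact hXm (hsub (mem_insert X m))
    · intro i hi
      exact hF0m ⟨i, hi, rfl⟩
  unfold Phi
  rw [dif_pos hex]
  exact hex.choose_spec

def Dpr (prior : Ordinal.{0} → Set Pt × Ordinal.{0}) (θ β : Ordinal.{0}) : Set Pt :=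
  (prior β).1 \ ⋃ γ ∈ {γ : Ordinal.{0} | γ < θ ∧ γ ≠ β ∧ (prior γ).2 = β}, (prior γ).1

def Spec (prior : Ordinal.{0} → Set Pt × Ordinal.{0}) (α : Ordinal.{0})
    (p : Set Pt × Ordinal.{0}) : Prop :=
  p.1 ⊆ AA α ∧ (∀ z ∈ p.1, α ∈ z) ∧ p.1 ⊆ ZZ ∧ p.1 ∉ II ∧
    ((p.2 = α ∧ ∀ β, β < α → p.1 ∩ Dpr prior α β = ∅) ∨
     (p.2 < α ∧ p.1 ⊆ Dpr prior α p.2 ∧ ∃ G ∈ (Phi ZZ II dd ((prior p.2).1)).1, p.1 ⊆ G))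

def stage : Ordinal.{0} → Set Pt × Ordinal.{0} :=
  Ordinal.lt_wf.fix fun α IH =>
    if h : ∃ p, Spec ZZ II dd AA (fun β => if hb : β < α then IH β hb else (∅, 0)) α p then
      h.choose
    else (∅, α)

def pri (α : Ordinal.{0}) : Ordinal.{0} → Set Pt × Ordinal.{0} :=
  fun β => if hb : β < α then stage ZZ II dd AA β else (∅, 0)

theorem stage_def (α : Ordinal.{0}) :
    stage ZZ II dd AA α =
      if h : ∃ p, Spec ZZ II dd AA (pri ZZ II dd AA α) α p then h.choose else (∅, α) := by
  unfold stage pri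
  exact WellFounded.fix_eq _ _ _

def DD (θ β : Ordinal.{0}) : Set Pt := Dpr (stage ZZ II dd AA) θ β

theorem Dpr_pri {θ β : Ordinal.{0}} (hβ : β < θ) :
    Dpr (pri ZZ II dd AA θ) θ β = DD ZZ II dd AA θ β := by
  unfold Dpr DD pri
  rw [dif_pos hβ]
  congr 1
  ext z
  simp only [mem_iUnion, mem_setOf_eq, exists_prop]
  constructor
  · rintro ⟨γ, ⟨h1, h2, h3⟩, h4⟩
    rw [dif_pos h1] at h3 h4
    exact ⟨γ, ⟨h1, h2, h3⟩, h4⟩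
  · rintro ⟨γ, ⟨h1, h2, h3⟩, h4⟩
    refine ⟨γ, ⟨h1, h2, ?_⟩, ?_⟩
    · rw [dif_pos h1]; exact h3
    · rw [dif_pos h1]; exact h4

theorem DD_mono {θ θ' β : Ordinal.{0}} (h : θ ≤ θ') :
    DD ZZ II dd AA θ' β ⊆ DD ZZ II dd AA θ β := by
  apply diff_subset_diff_right
  apply biUnion_subset_biUnion_left
  intro γ hγ
  exact ⟨hγ.1.trans_le h, hγ.2⟩

theorem spec_stage {α : Ordinal.{0}} (h : ∃ p, Spec ZZ II dd AA (pri ZZ II dd AA α) α p) :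
    Spec ZZ II dd AA (pri ZZ II dd AA α) α (stage ZZ II dd AA α) := by
  rw [stage_def, dif_pos h]
  exact h.choose_spec

theorem press (hI : IdealOn ZZ II) (hempty : (∅ : Set Pt) ∈ II)
    (hreg : ∀ (A : Set Pt) (f : Pt → Ordinal.{0}), Pos ZZ II A → (∀ z ∈ A, f z ∈ z) →
      ∃ x, ∃ B ⊆ A, Pos ZZ II B ∧ ∀ z ∈ B, f z = x)
    {W : Set Pt} (hWZ : W ⊆ ZZ) (hW : W ∉ II)
    {idx : Set Ordinal.{0}} {T : Ordinal.{0} → Set Pt}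
    (hcov : ∀ z ∈ W, ∃ γ ∈ idx, z ∈ T γ)
    (hlab : ∀ γ ∈ idx, ∀ z ∈ T γ, γ ∈ z) :
    ∃ γ ∈ idx, ∃ B, B ⊆ W ∧ B ⊆ ZZ ∧ B ∉ II ∧ B ⊆ T γ := by
  have hgdef : ∀ z ∈ W, (if h : ∃ γ ∈ idx, z ∈ T γ then h.choose else 0) ∈ idx ∧
      z ∈ T (if h : ∃ γ ∈ idx, z ∈ T γ then h.choose else 0) := by
    intro z hz
    rw [dif_pos (hcov z hz)]
    exact ⟨(hcov z hz).choose_spec.1, (hcov z hz).choose_spec.2⟩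
  set g : Pt → Ordinal.{0} := fun z => if h : ∃ γ ∈ idx, z ∈ T γ then h.choose else 0 with hg
  obtain ⟨x, B, hBW, hBpos, hBx⟩ :=
    hreg W g ⟨hWZ, hW⟩ (fun z hz => hlab _ (hgdef z hz).1 _ (hgdef z hz).2)
  have hBne : B.Nonempty :=
    nonempty_iff_ne_empty.mpr (fun he => hBpos.2 (by rw [he]; exact hempty))
  obtain ⟨z₀, hz₀⟩ := hBne
  refine ⟨g z₀, (hgdef z₀ (hBW hz₀)).1, B, hBW, hBpos.1, hBpos.2, ?_⟩
  intro z hz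
  have h1 : z ∈ T (g z) := (hgdef z (hBW hz)).2
  rw [hBx z hz] at h1
  rw [hBx z₀ hz₀]
  exact h1

theorem main_ex (lo : Ordinal.{0}) (hI : IdealOn ZZ II) (hnorm : NormalP lo ZZ II)
    (hempty : (∅ : Set Pt) ∈ II) (hole : dd.ord ≤ lo)
    (hnosat : ∀ A, Pos ZZ II A → ¬ Saturated ZZ (restrict II A) (Order.succ dd))
    (hA : ∀ i < dd.ord, Pos ZZ II (AA i)) :
    ∀ α, α < dd.ord → ∃ p, Spec ZZ II dd AA (pri ZZ II dd AA α) α p := by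
  intro α
  induction α using Ordinal.induction with
  | h α IH =>
  intro hα
  have hspec : ∀ β, β < α → Spec ZZ II dd AA (pri ZZ II dd AA β) β (stage ZZ II dd AA β) :=
    fun β hβ => spec_stage ZZ II dd AA (IH β hβ (hβ.trans hα))
  set A' : Set Pt := AA α ∩ {z | α ∈ z} with hA'
  have hA'Z : A' ⊆ ZZ := fun z hz => (hA α hα).1 hz.1
  have hA'I : A' ∉ II := by
    intro h
    apply (hA α hα).2
    apply hI.mono ?_ (hI.union h (hnorm.hat α (hα.trans_le hole)))
    intro z hz
    by_cases hz2 : α ∈ z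
    · exact Or.inl ⟨hz, hz2⟩
    · exact Or.inr ⟨(hA α hα).1 hz, hz2⟩
  set U : Set Pt := ⋃ β ∈ Iio α, DD ZZ II dd AA α β with hU
  by_cases hV : A' \ U ∉ II
  · refine ⟨(A' \ U, α), fun z hz => hz.1.1, fun z hz => hz.1.2,
      fun z hz => hA'Z hz.1, hV, Or.inl ⟨rfl, ?_⟩⟩
    intro β hβ
    rw [Dpr_pri ZZ II dd AA hβ]
    rw [eq_empty_iff_forall_notMem]
    rintro z ⟨hz1, hz2⟩
    exact hz1.2 (mem_biUnion hβ hz2)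
  · push_neg at hV
    have hWI : A' ∩ U ∉ II := by
      intro h
      apply hA'I
      apply hI.mono ?_ (hI.union hV h)
      intro z hz
      by_cases hzU : z ∈ U
      · exact Or.inr ⟨hz, hzU⟩
      · exact Or.inl ⟨hz, hzU⟩
    obtain ⟨β₀, hβ₀, B, hBW, hBZ2, hBI, hBT⟩ :=
      press ZZ II hI hempty hnorm.regress (fun z hz => hA'Z hz.1) hWI
        (idx := Iio α) (T := fun β => DD ZZ II dd AA α β)
        (by
          intro z hz
          obtain ⟨β, hβ, h⟩ := mem_iUnion₂.mp hz.2
          exact ⟨β, hβ, h⟩)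
        (fun γ hγ z hz => (hspec γ hγ).2.1 z (diff_subset hz))
    have hsβ := hspec β₀ hβ₀
    have hphi := phi_spec ZZ II dd hI hnosat hsβ.2.2.1 hsβ.2.2.2.1
    obtain ⟨G, hGmem, hBGI⟩ := hphi.2.2.1 B (hBT.trans diff_subset) hBZ2 hBI
    refine ⟨(B ∩ G, β₀), fun z hz => (hBW hz.1).1.1, fun z hz => (hBW hz.1).1.2,
      fun z hz => hBZ2 hz.1, hBGI, Or.inr ⟨hβ₀, ?_, ?_⟩⟩
    · rw [Dpr_pri ZZ II dd AA hβ₀]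
      exact fun z hz => hBT hz.1
    · refine ⟨G, ?_, inter_subset_right⟩
      have hβ₀' : β₀ < α := hβ₀
      have hpri : (pri ZZ II dd AA α β₀).1 = (stage ZZ II dd AA β₀).1 := by
        unfold pri; rw [dif_pos hβ₀']
      rw [hpri]
      exact hGmem

theorem Kdisj (hmain : ∀ α, α < dd.ord → ∃ p, Spec ZZ II dd AA (pri ZZ II dd AA α) α p) :
    ∀ γ, γ < dd.ord → ∀ β, β < γ →
      DD ZZ II dd AA (Order.succ γ) β ∩ DD ZZ II dd AA (Order.succ γ) γ = ∅ := by
  intro γ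
  induction γ using Ordinal.induction with
  | h γ IH =>
  intro hγ β hβ
  have hsγ := spec_stage ZZ II dd AA (hmain γ hγ)
  rw [eq_empty_iff_forall_notMem]
  rintro z ⟨hzβ, hzγ⟩
  have hzCγ : z ∈ (stage ZZ II dd AA γ).1 := diff_subset hzγ
  rcases hsγ.2.2.2.2 with ⟨hv, hd⟩ | ⟨h1, h2, -⟩
  · have hdβ := hd β hβ
    rw [Dpr_pri ZZ II dd AA hβ] at hdβ
    have hzβ' : z ∈ DD ZZ II dd AA γ β := DD_mono ZZ II dd AA (Order.le_succ γ) hzβ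
    exact eq_empty_iff_forall_notMem.mp hdβ z ⟨hzCγ, hzβ'⟩
  · rw [Dpr_pri ZZ II dd AA h1] at h2
    by_cases hwβ : (stage ZZ II dd AA γ).2 = β
    · apply hzβ.2
      refine mem_biUnion ?_ hzCγ
      exact ⟨Order.lt_succ γ, hβ.ne', hwβ⟩
    · have hzw : z ∈ DD ZZ II dd AA γ (stage ZZ II dd AA γ).2 := h2 hzCγ
      rcases Ne.lt_or_gt hwβ with hlt | hlt
      · -- w < β
        have hK := IH β hβ (hβ.trans hγ) _ hlt
        rw [eq_empty_iff_forall_notMem] at hK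
        exact hK z ⟨DD_mono ZZ II dd AA (Order.succ_le_iff.mpr hβ) hzw,
          DD_mono ZZ II dd AA (Order.succ_le_succ hβ.le) hzβ⟩
      · -- β < w
        have hK := IH _ h1 (h1.trans hγ) β hlt
        rw [eq_empty_iff_forall_notMem] at hK
        exact hK z ⟨DD_mono ZZ II dd AA (Order.succ_le_succ h1.le) hzβ,
          DD_mono ZZ II dd AA (Order.succ_le_iff.mpr h1) hzw⟩

theorem FIN (lo : Ordinal.{0}) (hI : IdealOn ZZ II) (hnorm : NormalP lo ZZ II)
    (hempty : (∅ : Set Pt) ∈ II)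
    (hnosat : ∀ A, Pos ZZ II A → ¬ Saturated ZZ (restrict II A) (Order.succ dd))
    (hmain : ∀ α, α < dd.ord → ∃ p, Spec ZZ II dd AA (pri ZZ II dd AA α) α p) :
    ∀ β, β < dd.ord → DD ZZ II dd AA dd.ord β ∉ II := by
  intro β hβ
  have hsβ := spec_stage ZZ II dd AA (hmain β hβ)
  have hphi := phi_spec ZZ II dd hI hnosat hsβ.2.2.1 hsβ.2.2.2.1
  set Cb : Set Pt := (stage ZZ II dd AA β).1 with hCb
  set S : Set Ordinal.{0} :=
    {γ : Ordinal.{0} | γ < dd.ord ∧ γ ≠ β ∧ (stage ZZ II dd AA γ).2 = β} with hSdef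
  have hGc : ∀ γ : Ordinal.{0}, ∃ G : Set Pt, γ ∈ S →
      G ∈ (Phi ZZ II dd Cb).1 ∧ (stage ZZ II dd AA γ).1 ⊆ G := by
    intro γ
    by_cases hγ : γ ∈ S
    · have hsγ := spec_stage ZZ II dd AA (hmain γ hγ.1)
      rcases hsγ.2.2.2.2 with ⟨hv, -⟩ | ⟨h1, -, h3⟩
      · exact absurd (hv.symm.trans hγ.2.2) hγ.2.1
      · rw [hγ.2.2] at h1 h3
        have hpri : (pri ZZ II dd AA γ β).1 = Cb := by
          unfold pri; rw [dif_pos h1]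
        rw [hpri] at h3
        obtain ⟨G, hG1, hG2⟩ := h3
        exact ⟨G, fun _ => ⟨hG1, hG2⟩⟩
    · exact ⟨∅, fun h => absurd h hγ⟩
  choose Gc hGcspec using hGc
  have hex : ∃ i, i < sOrd dd ∧ ∀ γ ∈ S, (Phi ZZ II dd Cb).2 i ≠ Gc γ := by
    by_contra hno
    push_neg at hno
    have hBfI : ∀ i, i < sOrd dd → (Phi ZZ II dd Cb).2 i ∉ II :=
      fun i hi => (hphi.1 _ (hphi.2.2.2.1 i hi)).2.2
    have hinj : Function.Injective (fun i : ↥(Iio (sOrd dd)) =>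
        (⟨(hno i.1 i.2).choose, ((hno i.1 i.2).choose_spec).1.1⟩ : ↥(Iio dd.ord))) := by
      intro i j hij
      have hi := (hno i.1 i.2).choose_spec.2
      have hj := (hno j.1 j.2).choose_spec.2
      have hγeq : (hno i.1 i.2).choose = (hno j.1 j.2).choose := congrArg Subtype.val hij
      have heq : (Phi ZZ II dd Cb).2 i.1 = (Phi ZZ II dd Cb).2 j.1 :=
        (hi.trans (congrArg Gc hγeq)).trans hj.symm
      by_contra hne
      have hne' : i.1 ≠ j.1 := fun h => hne (Subtype.ext h)
      have had := hphi.2.2.2.2 i.1 j.1 i.2 j.2 hne'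
      rw [heq, inter_self] at had
      exact hBfI j.1 j.2 had
    have hcard := Cardinal.mk_le_of_injective hinj
    rw [Ordinal.mk_Iio_ordinal, Ordinal.mk_Iio_ordinal, Cardinal.lift_le] at hcard
    have : (sOrd dd).card = Order.succ dd := Cardinal.card_ord _
    rw [this, Cardinal.card_ord] at hcard
    exact absurd hcard (Order.lt_succ dd).not_ge
  obtain ⟨i0, hi0, hi0ne⟩ := hex
  have hFsmem : (Phi ZZ II dd Cb).2 i0 ∈ (Phi ZZ II dd Cb).1 := hphi.2.2.2.1 i0 hi0
  set Fs : Set Pt := (Phi ZZ II dd Cb).2 i0 with hFsdef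
  have hFsC : Fs ⊆ Cb := (hphi.1 _ hFsmem).1
  have hFsZ : Fs ⊆ ZZ := (hphi.1 _ hFsmem).2.1
  have hFsI : Fs ∉ II := (hphi.1 _ hFsmem).2.2
  set UU : Set Pt := ⋃ γ ∈ S, (stage ZZ II dd AA γ).1 with hUU
  have hRI : Fs \ UU ∉ II := by
    intro hR
    have hWI : Fs ∩ UU ∉ II := by
      intro h
      apply hFsI
      apply hI.mono ?_ (hI.union hR h)
      intro z hz
      by_cases hzU : z ∈ UU
      · exact Or.inr ⟨hz, hzU⟩
      · exact Or.inl ⟨hz, hzU⟩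
    obtain ⟨γ₀, hγ₀, B, hBW, hBZ2, hBI, hBT⟩ :=
      press ZZ II hI hempty hnorm.regress (fun z hz => hFsZ hz.1) hWI
        (idx := S) (T := fun γ => (stage ZZ II dd AA γ).1)
        (by
          intro z hz
          obtain ⟨γ, hγ, h⟩ := mem_iUnion₂.mp hz.2
          exact ⟨γ, hγ, h⟩)
        (fun γ hγ z hz => (spec_stage ZZ II dd AA (hmain γ hγ.1)).2.1 z hz)
    apply hBI
    apply hI.mono ?_ (hphi.2.1 Fs hFsmem (Gc γ₀) ((hGcspec γ₀ hγ₀).1) (hi0ne γ₀ hγ₀))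
    intro z hz
    exact ⟨(hBW hz).1, (hGcspec γ₀ hγ₀).2 (hBT hz)⟩
  intro hDD
  apply hRI
  apply hI.mono ?_ hDD
  intro z hz
  refine ⟨hFsC hz.1, ?_⟩
  intro hzU
  apply hz.2
  obtain ⟨γ, hγ, h⟩ := mem_iUnion₂.mp hzU
  exact mem_biUnion (show γ ∈ S from hγ) h

end

end Stmt1Aux


/-- If `I` is a normal ideal on `𝒫(λ)` and `δ ≤ λ` is a cardinal such that no
`I`-positive `A` has `I ↾ A` being `δ⁺`-saturated, then `I` is `(2,δ)`-regular: every
`δ`-sequence of positive sets has a pairwise disjoint positive refinement. -/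
theorem stmt1 (lam δ : Cardinal.{0}) (hδ : δ ≤ lam)
    (Z : Set (Set Ordinal.{0})) (hZ : Z = {z | z ⊆ Set.Iio lam.ord})
    (I : Set (Set (Set Ordinal.{0})))
    (hI : IdealOn Z I) (hnorm : NormalP lam.ord Z I)
    (hnosat : ∀ A, Pos Z I A → ¬ Saturated Z (restrict I A) (Order.succ δ))
    (A : Ordinal → Set (Set Ordinal.{0})) (hA : ∀ i < δ.ord, Pos Z I (A i)) :
    ∃ D : Ordinal → Set (Set Ordinal.{0}),
      (∀ i < δ.ord, D i ⊆ A i ∧ Pos Z I (D i)) ∧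
      ∀ i j, i < δ.ord → j < δ.ord → i ≠ j → D i ∩ D j = ∅ := by
  classical
  have hempty : (∅ : Set (Set Ordinal.{0})) ∈ I := by
    apply hI.mono (empty_subset _) (hI.nonprincipal ∅ ?_)
    rw [hZ]
    exact empty_subset _
  have hole : δ.ord ≤ lam.ord := Cardinal.ord_le_ord.mpr hδ
  have hmain := Stmt1Aux.main_ex Z I δ A lam.ord hI hnorm hempty hole hnosat hA
  have hK := Stmt1Aux.Kdisj Z I δ A hmain
  have hFIN := Stmt1Aux.FIN Z I δ A lam.ord hI hnorm hempty hnosat hmain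
  refine ⟨fun i => Stmt1Aux.DD Z I δ A δ.ord i, fun i hi => ⟨?_, ?_, ?_⟩, ?_⟩
  · exact (diff_subset).trans (Stmt1Aux.spec_stage Z I δ A (hmain i hi)).1
  · exact (diff_subset).trans (Stmt1Aux.spec_stage Z I δ A (hmain i hi)).2.2.1
  · exact hFIN i hi
  · intro i j hi hj hij
    rw [eq_empty_iff_forall_notMem]
    intro z hz
    rcases hij.lt_or_gt with hlt | hlt
    · have h := hK j hj i hlt
      rw [eq_empty_iff_forall_notMem] at h
      exact h z ⟨Stmt1Aux.DD_mono Z I δ A (Order.succ_le_iff.mpr hj) hz.1,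
        Stmt1Aux.DD_mono Z I δ A (Order.succ_le_iff.mpr hj) hz.2⟩
    · have h := hK i hi j hlt
      rw [eq_empty_iff_forall_notMem] at h
      exact h z ⟨Stmt1Aux.DD_mono Z I δ A (Order.succ_le_iff.mpr hi) hz.2,
        Stmt1Aux.DD_mono Z I δ A (Order.succ_le_iff.mpr hi) hz.1⟩
end

section
/- Suppose I is a normal ideal on 𝒫(λ), λ is regular, μ is a cardinal with {z ⊆ λ : cf(sup z) = μ} ∈ I*, and the function z ↦ sup z is ≤ δ-to-one on a set in I*. Then I is (δ, cf(μ), λ)-regular: every λ-sequence of I-positive sets has an I-positive refinement such that every intersection of the refinement along a set of order type cf(μ) has cardinality at most δ. -/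
open Cardinal Set

section AuxStmt4

/-- The least element of `s` strictly above `t`. -/
noncomputable def nxt (s : Set Ordinal.{0}) (t : Ordinal.{0}) : Ordinal.{0} :=
  sInf {w | w ∈ s ∧ t < w}

lemma nxt_spec' {s : Set Ordinal.{0}} {t : Ordinal.{0}} (h : ∃ w ∈ s, t < w) :
    nxt s t ∈ s ∧ t < nxt s t := by
  have hne : {w | w ∈ s ∧ t < w}.Nonempty := by
    obtain ⟨w, hw, htw⟩ := h; exact ⟨w, hw, htw⟩
  exact csInf_mem hne

lemma exists_gt_of_lt_sSup {z : Set Ordinal.{0}} {t : Ordinal.{0}} (ht : t < sSup z) :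
    ∃ w ∈ z, t < w := by
  have hzne : z.Nonempty := by
    rcases Set.eq_empty_or_nonempty z with h | h
    · rw [h, csSup_empty] at ht
      exact absurd ht (by simp)
    · exact h
  by_contra hs
  push_neg at hs
  exact absurd (csSup_le hzne fun w hw => not_lt.1 fun hlt => (not_lt.2 (hs w hw)) hlt)
    (not_le.2 ht)

/-- A fixed fundamental sequence for `o`. -/
noncomputable def fseq (o : Ordinal.{0}) : ∀ b < o.cof.ord, Ordinal.{0} :=
  (Ordinal.exists_fundamental_sequence o).choose

lemma fseq_spec (o : Ordinal.{0}) : Ordinal.IsFundamentalSequence o o.cof.ord (fseq o) :=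
  (Ordinal.exists_fundamental_sequence o).choose_spec

lemma fseq_lt (o : Ordinal.{0}) (ξ : Ordinal.{0}) (h : ξ < o.cof.ord) : fseq o ξ h < o := by
  conv_rhs => rw [← (fseq_spec o).blsub_eq]
  exact Ordinal.lt_blsub _ _ _

/-- A thin cofinal subset of `z` (for `z` with `sSup z` limit): next points of `z` above
the fundamental sequence of `sSup z`. -/
def czSet (z : Set Ordinal.{0}) : Set Ordinal.{0} :=
  {w | ∃ ξ, ∃ h : ξ < (sSup z).cof.ord, w = nxt z (fseq (sSup z) ξ h)}

lemma cz_subset (z : Set Ordinal.{0}) : czSet z ⊆ z := by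
  rintro w ⟨ξ, hξ, rfl⟩
  exact (nxt_spec' (exists_gt_of_lt_sSup (fseq_lt _ _ _))).1

lemma cz_unbounded {z : Set Ordinal.{0}} {t : Ordinal.{0}} (ht : t < sSup z) :
    ∃ w ∈ czSet z, t < w := by
  have h1 : t < Ordinal.blsub.{0,0} _ (fseq (sSup z)) := by
    rw [(fseq_spec (sSup z)).blsub_eq]; exact ht
  obtain ⟨ξ, hξ, hle⟩ := Ordinal.lt_blsub_iff.1 h1
  exact ⟨nxt z (fseq (sSup z) ξ hξ), ⟨ξ, hξ, rfl⟩,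
    lt_of_le_of_lt hle (nxt_spec' (exists_gt_of_lt_sSup (fseq_lt _ _ _))).2⟩

lemma cz_bounded_small {z : Set Ordinal.{0}} {β : Ordinal.{0}} (hβ : β < sSup z)
    {Y : Set Ordinal.{0}} (hY : Y ⊆ czSet z) (hYb : ∀ y ∈ Y, y ≤ β) :
    #↥Y < Cardinal.lift.{1} (sSup z).cof := by
  have h1 : β < Ordinal.blsub.{0,0} _ (fseq (sSup z)) := by
    rw [(fseq_spec (sSup z)).blsub_eq]; exact hβ
  obtain ⟨ξ₀, hξ₀, hβle⟩ := Ordinal.lt_blsub_iff.1 h1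
  have hsub : Y ⊆ Set.range (fun p : ↥(Set.Iio ξ₀) =>
      nxt z (fseq (sSup z) p.1 (p.2.trans hξ₀))) := by
    intro y hy
    obtain ⟨ξ, hξ, rfl⟩ := hY hy
    have hlt : ξ < ξ₀ := by
      by_contra hge
      push_neg at hge
      have h2 : fseq (sSup z) ξ₀ hξ₀ ≤ fseq (sSup z) ξ hξ := by
        rcases eq_or_lt_of_le hge with h | h
        · exact le_of_eq (by subst h; rfl)
        · exact le_of_lt ((fseq_spec (sSup z)).strict_mono _ _ h)
      have h3 := (nxt_spec' (exists_gt_of_lt_sSup (fseq_lt (sSup z) ξ hξ))).2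
      exact absurd ((h3.trans_le (hYb _ hy)).trans_le (hβle.trans h2)) (lt_irrefl _)
    exact ⟨⟨ξ, hlt⟩, rfl⟩
  calc #↥Y ≤ #↥(Set.range (fun p : ↥(Set.Iio ξ₀) =>
        nxt z (fseq (sSup z) p.1 (p.2.trans hξ₀)))) := Cardinal.mk_le_mk_of_subset hsub
    _ ≤ #↥(Set.Iio ξ₀) := Cardinal.mk_range_le
    _ = Cardinal.lift.{1} ξ₀.card := Ordinal.mk_Iio_ordinal ξ₀
    _ < Cardinal.lift.{1} (sSup z).cof := Cardinal.lift_lt.2 (Cardinal.lt_ord.1 hξ₀)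

lemma cz_sup {z Y : Set Ordinal.{0}} (hbdd : BddAbove z) (hY : Y ⊆ czSet z)
    (hcard : Cardinal.lift.{1} (sSup z).cof ≤ #↥Y) (hcof : ℵ₀ ≤ (sSup z).cof) :
    sSup Y = sSup z := by
  have hYz : Y ⊆ z := fun y hy => cz_subset z (hY hy)
  have hYne : Y.Nonempty := by
    rw [← Set.nonempty_coe_sort, ← Cardinal.mk_ne_zero_iff]
    intro h0
    rw [h0] at hcard
    have : Cardinal.lift.{1} (sSup z).cof = 0 := le_antisymm hcard (zero_le)
    rw [Cardinal.lift_eq_zero] at this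
    rw [this] at hcof
    exact absurd (lt_of_lt_of_le Cardinal.aleph0_pos hcof) (lt_irrefl _)
  have hle : sSup Y ≤ sSup z := csSup_le hYne fun y hy => le_csSup hbdd (hYz hy)
  rcases lt_or_eq_of_le hle with hlt | heq
  · exfalso
    have hYb : ∀ y ∈ Y, y ≤ sSup Y := fun y hy => le_csSup (hbdd.mono hYz) hy
    exact absurd hcard (not_le.2 (cz_bounded_small hlt hY hYb))
  · exact heq

lemma pos_diff {P : Type*} {Z : Set P} {I : Set (Set P)} (hI : IdealOn Z I)
    {A N : Set P} (hA : Pos Z I A) (hN : N ∈ I) : Pos Z I (A \ N) := by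
  refine ⟨fun z hz => hA.1 hz.1, fun h => hA.2 (hI.mono ?_ (hI.union h hN))⟩
  intro z hz
  by_cases hzN : z ∈ N
  · exact Or.inr hzN
  · exact Or.inl ⟨hz, hzN⟩

lemma sup_mem_of_cof_one {z : Set Ordinal.{0}} (hbdd : BddAbove z)
    (h : (sSup z).cof = 1) : sSup z ∈ z := by
  rcases Ordinal.zero_or_succ_or_isSuccLimit (sSup z) with h0 | ⟨a, ha⟩ | hl
  · rw [h0, Ordinal.cof_zero] at h
    exact absurd h.symm one_ne_zero
  · replace ha := ha.symm
    have hne : z.Nonempty := by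
      rcases Set.eq_empty_or_nonempty z with he | he
      · rw [he, csSup_empty] at ha
        exact absurd ha.symm (Order.succ_ne_bot a)
      · exact he
    by_contra hns
    have hall : ∀ w ∈ z, w ≤ a := by
      intro w hw
      have h1 : w ≤ sSup z := le_csSup hbdd hw
      have h2 : w ≠ sSup z := fun he => hns (he ▸ hw)
      rw [ha] at h1 h2
      exact Order.lt_succ_iff.1 (lt_of_le_of_ne h1 h2)
    have : sSup z ≤ a := csSup_le hne hall
    rw [ha] at this
    exact absurd (Order.succ_le_iff.1 this) (lt_irrefl a)
  · rw [← Ordinal.aleph0_le_cof, h] at hl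
    exact absurd hl (not_le.2 Cardinal.one_lt_aleph0)

end AuxStmt4

/-- If `I` is a normal ideal on `𝒫(λ)`, `λ` regular, `μ` a cardinal with
`{z : cf(sup z) = μ} ∈ I*`, and `z ↦ sup z` is `≤ δ`-to-one on a set in `I*`, then `I` is
`(δ, cf(μ), λ)`-regular. -/
theorem stmt4 (lam μ δ : Cardinal.{0}) (hlam : lam.IsRegular)
    (Z : Set (Set Ordinal.{0})) (hZ : Z = {z | z ⊆ Set.Iio lam.ord})
    (I : Set (Set (Set Ordinal.{0})))
    (hI : IdealOn Z I) (hnorm : NormalP lam.ord Z I)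
    (hcof : Z \ {z | (sSup z).cof = μ} ∈ I)
    (hfib : ∃ S : Set (Set Ordinal.{0}), Z \ S ∈ I ∧
      ∀ o : Ordinal.{0}, #↥{z ∈ S | sSup z = o} ≤ Cardinal.lift.{1} δ) :
    Regular3 Z I (Cardinal.lift.{1} δ) (μ.ord.cof).ord lam.ord := by
  intro A hA
  obtain ⟨S, hS, hSfib⟩ := hfib
  have hemptyZ : (∅ : Set Ordinal.{0}) ∈ Z := by
    rw [hZ]; exact Set.empty_subset _
  have hemptyI : (∅ : Set (Set Ordinal.{0})) ∈ I :=
    hI.mono (Set.empty_subset _) (hI.nonprincipal ∅ hemptyZ)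
  have hbddZ : ∀ z ∈ Z, BddAbove z := by
    intro z hz
    rw [hZ] at hz
    exact ⟨lam.ord, fun w hw => le_of_lt (hz hw)⟩
  have hsubZ : ∀ z ∈ Z, z ⊆ Set.Iio lam.ord := by
    intro z hz; rw [hZ] at hz; exact hz
  have hlamlim : Order.IsSuccLimit lam.ord := Cardinal.isSuccLimit_ord hlam.aleph0_le
  have hone : (1 : Ordinal.{0}) < lam.ord := Ordinal.one_lt_of_isSuccLimit hlamlim
  have hz₀ : ∃ z ∈ Z, (sSup z).cof = μ := by
    by_contra h
    push_neg at h
    refine hI.proper (hI.mono (fun z hz => ?_) hcof)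
    exact ⟨hz, h z hz⟩
  obtain ⟨z₀, hz₀Z, hz₀C⟩ := hz₀
  rcases Ordinal.zero_or_succ_or_isSuccLimit (sSup z₀) with h0 | ⟨a, ha⟩ | hlim
  · -- μ = 0 : contradiction
    exfalso
    have hμ0 : μ = 0 := by rw [← hz₀C, h0, Ordinal.cof_zero]
    apply hI.proper
    apply hI.mono _ (hI.union hcof (hnorm.hat 1 hone))
    intro z hz
    by_cases hzC : (sSup z).cof = μ
    · right
      refine ⟨hz, fun h1z => ?_⟩
      have : sSup z = 0 := Ordinal.cof_eq_zero.1 (by rw [hzC, hμ0])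
      have h1 : (1 : Ordinal) ≤ sSup z := le_csSup (hbddZ z hz) h1z
      rw [this] at h1
      exact absurd h1 (by simp)
    · exact Or.inl ⟨hz, hzC⟩
  · -- μ = 1
    have hμ1 : μ = 1 := by rw [← hz₀C, ← ha, Ordinal.cof_succ]
    have hcof1 : Ordinal.cof 1 = 1 := by rw [← Ordinal.succ_zero, Ordinal.cof_succ]
    have hb : (μ.ord.cof).ord = 1 := by
      rw [hμ1, Cardinal.ord_one, hcof1, Cardinal.ord_one]
    have KEY1 : ∀ i : Ordinal.{0}, ∃ p : (Set (Set Ordinal.{0})) × Ordinal.{0},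
        i < lam.ord → (p.1 ⊆ A i ∧ Pos Z I p.1 ∧ p.1 ⊆ {z ∈ S | sSup z = p.2}) := by
      intro i
      by_cases hi : i < lam.ord
      swap
      · exact ⟨(∅, 0), fun h => absurd h hi⟩
      have hpos : Pos Z I (A i \ ((Z \ S) ∪ (Z \ {z | (sSup z).cof = μ}))) :=
        pos_diff hI (hA i hi) (hI.union hS hcof)
      have hregf : ∀ z ∈ A i \ ((Z \ S) ∪ (Z \ {z | (sSup z).cof = μ})), sSup z ∈ z := by
        intro z hz
        have hzZ : z ∈ Z := (hA i hi).1 hz.1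
        have hzC : (sSup z).cof = μ := by
          by_contra h
          exact hz.2 (Or.inr ⟨hzZ, h⟩)
        exact sup_mem_of_cof_one (hbddZ z hzZ) (by rw [hzC, hμ1])
      obtain ⟨o, B, hBA, hBpos, hBconst⟩ := hnorm.regress _ (fun z => sSup z) hpos hregf
      refine ⟨(B, o), fun _ => ⟨hBA.trans Set.diff_subset, hBpos, ?_⟩⟩
      intro z hz
      have hzS : z ∈ S := by
        have := hBA hz
        by_contra h
        exact this.2 (Or.inl ⟨(hA i hi).1 this.1, h⟩)
      exact ⟨hzS, hBconst z hz⟩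
    refine ⟨fun i => (KEY1 i).choose.1, fun i hi =>
      ⟨((KEY1 i).choose_spec hi).1, ((KEY1 i).choose_spec hi).2.1⟩, ?_⟩
    intro x hx hot
    rw [hb] at hot
    obtain ⟨e⟩ := hot
    have h01 : (0 : Ordinal.{0}) ∈ Set.Iio (1 : Ordinal.{0}) := Set.mem_Iio.2 zero_lt_one
    have hi₀x : ((e.symm ⟨0, h01⟩ : ↥x)).1 ∈ x := (e.symm ⟨0, h01⟩).2
    set i₀ : Ordinal.{0} := ((e.symm ⟨0, h01⟩ : ↥x)).1 with hi₀
    have hsub : (⋂ i ∈ x, (KEY1 i).choose.1) ⊆ {z ∈ S | sSup z = (KEY1 i₀).choose.2} := by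
      intro z hz
      rw [Set.mem_iInter₂] at hz
      exact ((KEY1 i₀).choose_spec (hx hi₀x)).2.2 (hz i₀ hi₀x)
    exact le_trans (Cardinal.mk_le_mk_of_subset hsub) (hSfib _)
  · -- μ infinite regular
    have hμreg : Cardinal.IsRegular μ := by
      rw [← hz₀C]; exact Cardinal.isRegular_cof hlim
    have hb : (μ.ord.cof).ord = μ.ord := by rw [hμreg.cof_eq]
    have KEY : ∀ i t : Ordinal.{0}, ∃ p : Ordinal.{0} × Set (Set Ordinal.{0}),
        (i < lam.ord → t < lam.ord →
          (p.2 ⊆ A i ∧ Pos Z I p.2 ∧ t < p.1 ∧ p.1 < lam.ord ∧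
            ∀ z ∈ p.2, z ∈ S ∧ z ∈ Z ∧ (sSup z).cof = μ ∧ p.1 ∈ czSet z)) := by
      intro i t
      by_cases hit : i < lam.ord ∧ t < lam.ord
      swap
      · exact ⟨(0, ∅), fun h1 h2 => absurd ⟨h1, h2⟩ hit⟩
      obtain ⟨hi, ht⟩ := hit
      have ht1 : t + 1 < lam.ord := by
        rw [Ordinal.add_one_eq_succ]; exact hlamlim.succ_lt ht
      have hN : ((Z \ S) ∪ ((Z \ {z | (sSup z).cof = μ}) ∪ {z ∈ Z | t + 1 ∉ z})) ∈ I :=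
        hI.union hS (hI.union hcof (hnorm.hat (t + 1) ht1))
      have hpos : Pos Z I (A i \ ((Z \ S) ∪ ((Z \ {z | (sSup z).cof = μ}) ∪ {z ∈ Z | t + 1 ∉ z}))) :=
        pos_diff hI (hA i hi) hN
      have hprops : ∀ z ∈ A i \ ((Z \ S) ∪ ((Z \ {z | (sSup z).cof = μ}) ∪ {z ∈ Z | t + 1 ∉ z})),
          z ∈ S ∧ z ∈ Z ∧ (sSup z).cof = μ ∧ t < sSup z := by
        intro z hz
        have hzZ : z ∈ Z := (hA i hi).1 hz.1
        have h1 : z ∈ S := by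
          by_contra h; exact hz.2 (Or.inl ⟨hzZ, h⟩)
        have h2 : (sSup z).cof = μ := by
          by_contra h; exact hz.2 (Or.inr (Or.inl ⟨hzZ, h⟩))
        have h3 : t + 1 ∈ z := by
          by_contra h; exact hz.2 (Or.inr (Or.inr ⟨hzZ, h⟩))
        have h4 : t < sSup z := by
          have htt : t < t + 1 := by
            rw [Ordinal.add_one_eq_succ]; exact Order.lt_succ t
          exact lt_of_lt_of_le htt (le_csSup (hbddZ z hzZ) h3)
        exact ⟨h1, hzZ, h2, h4⟩
      have hregf : ∀ z ∈ A i \ ((Z \ S) ∪ ((Z \ {z | (sSup z).cof = μ}) ∪ {z ∈ Z | t + 1 ∉ z})),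
          nxt (czSet z) t ∈ z :=
        fun z hz => cz_subset z (nxt_spec' (cz_unbounded (hprops z hz).2.2.2)).1
      obtain ⟨v, B, hBA, hBpos, hBconst⟩ :=
        hnorm.regress _ (fun z => nxt (czSet z) t) hpos hregf
      have hBne : B.Nonempty := by
        rcases Set.eq_empty_or_nonempty B with he | he
        · rw [he] at hBpos; exact absurd hemptyI hBpos.2
        · exact he
      obtain ⟨z₁, hz₁⟩ := hBne
      have hv1 : t < v := by
        rw [← hBconst z₁ hz₁]
        exact (nxt_spec' (cz_unbounded (hprops z₁ (hBA hz₁)).2.2.2)).2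
      have hv2 : v < lam.ord := by
        rw [← hBconst z₁ hz₁]
        exact hsubZ z₁ (hBpos.1 hz₁) (hregf z₁ (hBA hz₁))
      refine ⟨(v, B), fun _ _ => ⟨hBA.trans Set.diff_subset, hBpos, hv1, hv2, ?_⟩⟩
      intro z hz
      have hp := hprops z (hBA hz)
      refine ⟨hp.1, hp.2.1, hp.2.2.1, ?_⟩
      rw [← hBconst z hz]
      exact (nxt_spec' (cz_unbounded hp.2.2.2)).1
    set g : Ordinal.{0} → Ordinal.{0} := Ordinal.lt_wf.fix
      (fun i rec => (KEY i ((i + 1) ⊔ Ordinal.blsub.{0,0} i rec)).choose.1) with hgdef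
    set t : Ordinal.{0} → Ordinal.{0} :=
      fun i => (i + 1) ⊔ Ordinal.blsub.{0,0} i (fun j _ => g j) with htdef
    have hg : ∀ i, g i = (KEY i (t i)).choose.1 := by
      intro i
      rw [hgdef]
      rw [WellFounded.fix_eq]
    have hlt : ∀ i, i < lam.ord → t i < lam.ord := by
      intro i
      induction i using Ordinal.induction with
      | _ i IH =>
        intro hi
        have h1 : i + 1 < lam.ord := by
          rw [Ordinal.add_one_eq_succ]; exact hlamlim.succ_lt hi
        have h2 : Ordinal.blsub.{0,0} i (fun j _ => g j) < lam.ord := by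
          apply Ordinal.blsub_lt_ord
          · rw [hlam.cof_eq]; exact Cardinal.lt_ord.1 hi
          · intro j hj
            have hj' : j < lam.ord := hj.trans hi
            have := ((KEY j (t j)).choose_spec hj' (IH j hj hj')).2.2.2.1
            rw [hg j]
            exact this
        exact max_lt h1 h2
    have hspec : ∀ i, i < lam.ord →
        ((KEY i (t i)).choose.2 ⊆ A i ∧ Pos Z I (KEY i (t i)).choose.2 ∧ t i < g i ∧
          g i < lam.ord ∧ ∀ z ∈ (KEY i (t i)).choose.2,
            z ∈ S ∧ z ∈ Z ∧ (sSup z).cof = μ ∧ g i ∈ czSet z) := by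
      intro i hi
      rw [hg i]
      exact (KEY i (t i)).choose_spec hi (hlt i hi)
    have hmono : ∀ j i, j < i → i < lam.ord → g j < g i := by
      intro j i hji hi
      have h1 : g j < Ordinal.blsub.{0,0} i (fun j _ => g j) := Ordinal.lt_blsub _ j hji
      exact lt_of_lt_of_le h1 ((le_max_right _ _).trans (le_of_lt (hspec i hi).2.2.1))
    refine ⟨fun i => (KEY i (t i)).choose.2, fun i hi => ⟨(hspec i hi).1, (hspec i hi).2.1⟩, ?_⟩
    intro x hx hot
    rw [hb] at hot
    obtain ⟨e⟩ := hot
    have hxcard : #↥x = Cardinal.lift.{1} μ := by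
      calc #↥x = #↥(Set.Iio μ.ord) := Cardinal.mk_congr e.toEquiv
        _ = Cardinal.lift.{1} μ.ord.card := Ordinal.mk_Iio_ordinal μ.ord
        _ = Cardinal.lift.{1} μ := by rw [Cardinal.card_ord]
    have h0μ : (0 : Ordinal.{0}) ∈ Set.Iio μ.ord := Set.mem_Iio.2 hμreg.ord_pos
    have hi₀x : ((e.symm ⟨0, h0μ⟩ : ↥x)).1 ∈ x := (e.symm ⟨0, h0μ⟩).2
    set i₀ : Ordinal.{0} := ((e.symm ⟨0, h0μ⟩ : ↥x)).1 with hi₀def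
    have hsub : (⋂ i ∈ x, (KEY i (t i)).choose.2) ⊆ {z ∈ S | sSup z = sSup (g '' x)} := by
      intro z hz
      rw [Set.mem_iInter₂] at hz
      have hz₀ := (hspec i₀ (hx hi₀x)).2.2.2.2 z (hz i₀ hi₀x)
      have hzZ : z ∈ Z := hz₀.2.1
      have hcofz : (sSup z).cof = μ := hz₀.2.2.1
      have hY : g '' x ⊆ czSet z := by
        rintro w ⟨i, hix, rfl⟩
        exact ((hspec i (hx hix)).2.2.2.2 z (hz i hix)).2.2.2
      have hinj : Set.InjOn g x := by
        intro p hp q hq hpq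
        rcases lt_trichotomy p q with h | h | h
        · exact absurd hpq (ne_of_lt (hmono p q h (hx hq)))
        · exact h
        · exact absurd hpq.symm (ne_of_lt (hmono q p h (hx hp)))
      have hYcard : Cardinal.lift.{1} (sSup z).cof ≤ #↥(g '' x) := by
        rw [Cardinal.mk_image_eq_of_injOn g x hinj, hxcard, hcofz]
      have hsupeq := cz_sup (hbddZ z hzZ) hY hYcard (by rw [hcofz]; exact hμreg.aleph0_le)
      exact ⟨hz₀.1, hsupeq.symm⟩
    exact le_trans (Cardinal.mk_le_mk_of_subset hsub) (hSfib _)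
end

section
/- If κ is a successor cardinal, then no κ-complete ideal on κ is κ-saturated. -/
open Cardinal Set

/-- If `κ` is a successor cardinal, then no `κ`-complete ideal on `κ` is
`κ`-saturated. -/
theorem stmt5 (κ μ : Cardinal.{0}) (hμ : ℵ₀ ≤ μ) (hκ : κ = Order.succ μ)
    (I : Set (Set Ordinal.{0}))
    (hI : IdealOn (Set.Iio κ.ord) I) (hcomp : Complete I κ) :
    ¬ Saturated (Set.Iio κ.ord) I κ := by
  intro hsat
  have hμκ : μ < κ := by rw [hκ]; exact Order.lt_succ μ
  have hκ0 : ℵ₀ ≤ κ := hμ.trans hμκ.le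
  have hlim : Order.IsSuccLimit κ.ord := Cardinal.isSuccLimit_ord hκ0
  have hμord : μ.ord < κ.ord := Cardinal.ord_lt_ord.mpr hμκ
  have hzero : (0 : Ordinal) < κ.ord := by
    rw [Cardinal.lt_ord, Ordinal.card_zero]
    exact lt_of_lt_of_le Cardinal.aleph0_pos hκ0
  have hempty : (∅ : Set Ordinal.{0}) ∈ I :=
    hI.mono (Set.empty_subset _) (hI.nonprincipal 0 hzero)
  -- Construct the Ulam matrix: injections `g β : Iio β → Iio μ.ord` for `β < κ.ord`.
  have hg : ∀ β : Ordinal.{0}, ∃ g : Ordinal.{0} → Ordinal.{0},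
      β < κ.ord → (∀ α < β, g α < μ.ord) ∧
        (∀ α < β, ∀ α' < β, g α = g α' → α = α') := by
    intro β
    by_cases hβ : β < κ.ord
    · have hcard : #(Set.Iio β) ≤ #(Set.Iio μ.ord) := by
        rw [Ordinal.mk_Iio_ordinal, Ordinal.mk_Iio_ordinal, Cardinal.card_ord,
          Cardinal.lift_le]
        have := Cardinal.lt_ord.mp hβ
        rw [hκ, Order.lt_succ_iff] at this
        exact this
      obtain ⟨e⟩ := (Cardinal.le_def _ _).mp hcard
      refine ⟨fun α => if h : α < β then (e ⟨α, h⟩ : Ordinal) else 0, fun _ => ⟨?_, ?_⟩⟩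
      · intro α hα
        simp only [dif_pos hα]
        exact (e ⟨α, hα⟩).2
      · intro α hα α' hα' hgg
        simp only [dif_pos hα, dif_pos hα'] at hgg
        have := e.injective (Subtype.ext hgg)
        exact congrArg Subtype.val this
    · exact ⟨fun _ => 0, fun h => absurd h hβ⟩
  choose g hgspec using hg
  set A : Ordinal.{0} → Ordinal.{0} → Set Ordinal.{0} :=
    fun ξ α => {β | α < β ∧ β < κ.ord ∧ g β α = ξ} with hA
  -- initial segments are in I
  have hseg : ∀ α < κ.ord, Set.Iio (α + 1) ∈ I := by
    intro α hα
    have hsucc : α + 1 < κ.ord := by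
      rw [Ordinal.add_one_eq_succ]; exact hlim.succ_lt hα
    have := hcomp (α + 1) (fun i => {i}) hsucc
      (fun i hi => hI.nonprincipal i (hi.trans hsucc))
    rwa [Set.biUnion_of_singleton] at this
  -- on each column, some entry is positive
  have hcol : ∀ α : Ordinal.{0}, ∃ ξ : Ordinal.{0},
      α < κ.ord → ξ < μ.ord ∧ A ξ α ∉ I := by
    intro α
    by_contra hcon
    push_neg at hcon
    have hα : α < κ.ord := (hcon 0).1
    have hall : ∀ ξ < μ.ord, A ξ α ∈ I := fun ξ hξ => (hcon ξ).2 hξ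
    have hU : (⋃ ξ ∈ Set.Iio μ.ord, A ξ α) ∈ I :=
      hcomp μ.ord (fun ξ => A ξ α) hμord hall
    have hcover : Set.Iio κ.ord ⊆ Set.Iio (α + 1) ∪ ⋃ ξ ∈ Set.Iio μ.ord, A ξ α := by
      intro β hβ
      rcases lt_or_ge α β with hαβ | hβα
      · right
        refine Set.mem_biUnion ((hgspec β hβ).1 α hαβ) ?_
        exact ⟨hαβ, hβ, rfl⟩
      · left
        exact lt_of_le_of_lt hβα (lt_of_lt_of_le (lt_add_one α) le_rfl)
    exact hI.proper (hI.mono hcover (hI.union (hseg α hα) hU))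
  choose ξf hξf using hcol
  -- pigeonhole: for some ξ, the set of α choosing ξ has full size
  set T : Ordinal.{0} → Set Ordinal.{0} := fun ξ => {α | α < κ.ord ∧ ξf α = ξ} with hT
  have hμ1 : ℵ₀ ≤ Cardinal.lift.{1} μ := Cardinal.aleph0_le_lift.mpr hμ
  have hbig : ∃ ξ, Cardinal.lift.{1} κ ≤ #(T ξ) := by
    by_contra hcon
    push_neg at hcon
    have hTle : ∀ ξ, #(T ξ) ≤ Cardinal.lift.{1} μ := by
      intro ξ
      have := hcon ξ
      rwa [hκ, Cardinal.lift_succ, Order.lt_succ_iff] at this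
    have hcover : Set.Iio κ.ord ⊆ ⋃ ξ ∈ Set.Iio μ.ord, T ξ := by
      intro α hα
      exact Set.mem_biUnion (hξf α hα).1 ⟨hα, rfl⟩
    have h1 : Cardinal.lift.{1} κ ≤ #(⋃ ξ ∈ Set.Iio μ.ord, T ξ) := by
      have := Cardinal.mk_le_mk_of_subset hcover
      rwa [Ordinal.mk_Iio_ordinal, Cardinal.card_ord] at this
    have h2 : #(⋃ ξ ∈ Set.Iio μ.ord, T ξ) ≤ #(Set.Iio μ.ord) * ⨆ ξ : Set.Iio μ.ord, #(T ξ) :=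
      Cardinal.mk_biUnion_le _ _
    have h3 : (⨆ ξ : Set.Iio μ.ord, #(T ξ)) ≤ Cardinal.lift.{1} μ := by
      have : Nonempty (Set.Iio μ.ord) := ⟨⟨0, by
        rw [Set.mem_Iio, Cardinal.lt_ord, Ordinal.card_zero]
        exact lt_of_lt_of_le Cardinal.aleph0_pos hμ⟩⟩
      exact ciSup_le' fun ξ => hTle ξ
    have h4 : #(Set.Iio μ.ord) = Cardinal.lift.{1} μ := by
      rw [Ordinal.mk_Iio_ordinal, Cardinal.card_ord]
    have h5 : Cardinal.lift.{1} κ ≤ Cardinal.lift.{1} μ := by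
      calc Cardinal.lift.{1} κ ≤ _ := h1
        _ ≤ _ := h2
        _ ≤ Cardinal.lift.{1} μ * Cardinal.lift.{1} μ := by
            rw [h4]; exact mul_le_mul_right h3 _
        _ = Cardinal.lift.{1} μ := Cardinal.mul_eq_self hμ1
    exact absurd h5 (not_le.mpr (Cardinal.lift_lt.mpr hμκ))
  obtain ⟨ξ, hξbig⟩ := hbig
  have hle : #(Set.Iio κ.ord) ≤ #(T ξ) := by
    rw [Ordinal.mk_Iio_ordinal, Cardinal.card_ord]; exact hξbig
  obtain ⟨e⟩ := (Cardinal.le_def _ _).mp hle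
  -- the sequence witnessing non-saturation
  refine hsat ⟨fun i => if h : i < κ.ord then A ξ (e ⟨i, h⟩) else ∅, ?_, ?_⟩
  · intro i hi
    simp only [dif_pos hi]
    obtain ⟨hακ, hαξ⟩ := (e ⟨i, hi⟩).2
    constructor
    · intro β hβ
      exact hβ.2.1
    · have := (hξf _ hακ).2
      rwa [hαξ] at this
  · intro i j hi hj hij
    simp only [dif_pos hi, dif_pos hj]
    have hne : ((e ⟨i, hi⟩ : T ξ) : Ordinal.{0}) ≠ ((e ⟨j, hj⟩ : T ξ) : Ordinal.{0}) := by
      intro h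
      exact hij (congrArg Subtype.val (e.injective (Subtype.ext h)))
    have : A ξ (e ⟨i, hi⟩) ∩ A ξ (e ⟨j, hj⟩) = ∅ := by
      ext β
      simp only [Set.mem_inter_iff, Set.mem_empty_iff_false, iff_false]
      rintro ⟨⟨h1, hβκ, h2⟩, ⟨h3, _, h4⟩⟩
      exact hne ((hgspec β hβκ).2 _ h1 _ h3 (h2.trans h4.symm))
    rw [this]
    exact hempty
end

section
/- Suppose κ = μ⁺ and I is a κ-complete ideal on κ. If every sequence ⟨A_i : i < κ⟩ of I-positive sets has an I-positive refinement ⟨B_i : i < κ⟩ such that ⋂_{i ∈ x} B_i ∈ I whenever x has order type ≥ ξ, where ξ satisfies μ^ξ = μ, then I is (ξ+1, κ)-regular. -/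
open Cardinal Set

/-- If `κ = μ⁺`, `I` is a `κ`-complete ideal on `κ`, and every `κ`-sequence of
`I`-positive sets has a positive refinement whose intersections along index sets of order
type `≥ ξ` lie in `I` (where `μ^ξ = μ`), then `I` is `(ξ+1, κ)`-regular. -/
theorem stmt7 (κ μ ξ : Cardinal.{0}) (hμ : ℵ₀ ≤ μ) (hκ : κ = Order.succ μ)
    (hξ : μ ^ ξ = μ)
    (I : Set (Set Ordinal.{0}))
    (hI : IdealOn (Set.Iio κ.ord) I) (hcomp : Complete I κ)
    (hIreg : ∀ A : Ordinal → Set Ordinal.{0},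
      (∀ i < κ.ord, Pos (Set.Iio κ.ord) I (A i)) →
      ∃ B : Ordinal → Set Ordinal.{0},
        (∀ i < κ.ord, B i ⊆ A i ∧ Pos (Set.Iio κ.ord) I (B i)) ∧
        ∀ x : Set Ordinal.{0}, x ⊆ Set.Iio κ.ord → OtypeGE x ξ.ord → ⋂ i ∈ x, B i ∈ I) :
    Regular2 (Set.Iio κ.ord) I (ξ.ord + 1) κ.ord := by
  classical
  intro A hA
  obtain ⟨B, hB, hBint⟩ := hIreg A hA
  have hμκ : μ < κ := hκ ▸ Order.lt_succ μ
  have hκ0 : (0 : Ordinal) < κ.ord := by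
    rw [Cardinal.lt_ord, Ordinal.card_zero]
    exact (Cardinal.aleph0_pos.trans_le hμ).trans hμκ
  have hempty : (∅ : Set Ordinal) ∈ I :=
    hI.mono (Set.empty_subset _) (hI.nonprincipal 0 hκ0)
  have hliftξ : #(Set.Iio ξ.ord) = Cardinal.lift.{1} ξ := by
    rw [Ordinal.mk_Iio_ordinal, Cardinal.card_ord]
  set S : Ordinal → Set (Set Ordinal) := fun α =>
    {y | y ⊆ Set.Iio α ∧ #↥y ≤ Cardinal.lift.{1} ξ ∧ OtypeGE y ξ.ord} with hS
  have hDex : ∀ α, α < κ.ord → ∃ D : Set Ordinal, D ∈ I ∧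
      ∀ y ∈ S α, (⋂ β ∈ y, B β) ⊆ D := by
    intro α hα
    have hSI : ∀ y ∈ S α, (⋂ β ∈ y, B β) ∈ I := fun y hy =>
      hBint y (hy.1.trans fun z hz => lt_trans hz hα) hy.2.2
    have hcard : #↥(S α) ≤ #↥(Set.Iio μ.ord) := by
      rw [Ordinal.mk_Iio_ordinal, Cardinal.card_ord]
      have h1 : #↥(S α) ≤ #{ t : Set Ordinal // t ⊆ Set.Iio α ∧ #↥t ≤ Cardinal.lift.{1} ξ } :=
        Cardinal.mk_le_of_injective (f := fun y => ⟨y.1, y.2.1, y.2.2.1⟩)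
          (fun a b h => Subtype.ext (Subtype.mk_eq_mk.mp h))
      refine h1.trans ((Cardinal.mk_bounded_subset_le _ _).trans ?_)
      have h2 : max #↥(Set.Iio α) ℵ₀ ≤ Cardinal.lift.{1} μ := by
        apply max_le
        · rw [Ordinal.mk_Iio_ordinal]
          exact Cardinal.lift_le.2 (Order.lt_succ_iff.1 (hκ ▸ Cardinal.lt_ord.1 hα))
        · exact Cardinal.aleph0_le_lift.2 hμ
      calc max #↥(Set.Iio α) ℵ₀ ^ Cardinal.lift.{1} ξ
          ≤ Cardinal.lift.{1} μ ^ Cardinal.lift.{1} ξ := Cardinal.power_le_power_right h2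
        _ = Cardinal.lift.{1} (μ ^ ξ) := (Cardinal.lift_power μ ξ).symm
        _ = Cardinal.lift.{1} μ := by rw [hξ]
    obtain ⟨j⟩ := (Cardinal.le_def _ _).1 hcard
    set f : Ordinal → Set Ordinal := fun i =>
      ⋃ (y : ↥(S α)) (_ : ((j y : ↥(Set.Iio μ.ord)) : Ordinal) = i),
        ⋂ β ∈ (y : Set Ordinal), B β with hf
    refine ⟨⋃ i ∈ Set.Iio μ.ord, f i, ?_, ?_⟩
    · apply hcomp μ.ord f (Cardinal.ord_lt_ord.2 hμκ)
      intro i _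
      by_cases h : ∃ y : ↥(S α), ((j y : ↥(Set.Iio μ.ord)) : Ordinal) = i
      · obtain ⟨y0, hy0⟩ := h
        refine hI.mono ?_ (hSI y0 y0.2)
        refine Set.iUnion₂_subset fun y hy => ?_
        have : y = y0 := j.injective (Subtype.ext (hy.trans hy0.symm))
        rw [this]
      · refine hI.mono ?_ hempty
        exact Set.iUnion₂_subset fun y hy => absurd ⟨y, hy⟩ h
    · intro y hy z hz
      refine Set.mem_biUnion (j ⟨y, hy⟩).2 ?_
      exact Set.mem_iUnion₂.2 ⟨⟨y, hy⟩, rfl, hz⟩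
  choose D hDI hDsub using hDex
  set C : Ordinal → Set Ordinal := fun α =>
    if h : α < κ.ord then B α \ D α h else ∅ with hC
  refine ⟨C, ?_, ?_⟩
  · intro i hi
    have hBi := hB i hi
    have hCi : C i = B i \ D i hi := by simp only [hC, dif_pos hi]
    refine ⟨hCi ▸ Set.diff_subset.trans hBi.1, hCi ▸ Set.diff_subset.trans hBi.2.1, ?_⟩
    intro hCI
    apply hBi.2.2
    refine hI.mono (B := C i ∪ D i hi) ?_ (hI.union hCI (hDI i hi))
    intro z hz
    by_cases h : z ∈ D i hi
    · exact Or.inr h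
    · exact Or.inl (hCi ▸ ⟨hz, h⟩)
  · intro x hx hox
    obtain ⟨e⟩ := hox
    by_contra hne
    obtain ⟨z, hz⟩ := Set.nonempty_iff_ne_empty.2 hne
    have htlt : ξ.ord < ξ.ord + 1 := by
      rw [Ordinal.add_one_eq_succ]; exact Order.lt_succ _
    set αs : ↥x := e.symm ⟨ξ.ord, htlt⟩ with hαs
    have hαx : (αs : Ordinal) ∈ x := αs.2
    have hακ : (αs : Ordinal) < κ.ord := hx hαx
    set g : ↥(Set.Iio ξ.ord) → Ordinal := fun i =>
      (e.symm ⟨i.1, lt_trans i.2 htlt⟩).1 with hg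
    have hgx : ∀ i, g i ∈ x := fun i => (e.symm _).2
    have hgiff : ∀ i j : ↥(Set.Iio ξ.ord), g i < g j ↔ (i : Ordinal) < (j : Ordinal) := by
      intro i j
      exact e.symm.map_rel_iff (a := ⟨i.1, lt_trans i.2 htlt⟩) (b := ⟨j.1, lt_trans j.2 htlt⟩)
    have hgα : ∀ i, g i < (αs : Ordinal) := by
      intro i
      exact e.symm.map_rel_iff (a := ⟨i.1, lt_trans i.2 htlt⟩) (b := ⟨ξ.ord, htlt⟩) |>.2 i.2
    set y : Set Ordinal := Set.range g with hy
    have hyS : y ∈ S (αs : Ordinal) := by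
      refine ⟨?_, ?_, ?_⟩
      · rintro _ ⟨i, rfl⟩; exact hgα i
      · exact Cardinal.mk_range_le.trans hliftξ.le
      · refine ⟨⟨⟨fun i => ⟨g i, Set.mem_range_self i⟩, ?_⟩, ?_⟩⟩
        · intro a b h
          have hab : g a = g b := Subtype.mk_eq_mk.mp h
          rcases lt_trichotomy a.1 b.1 with h' | h' | h'
          · exact absurd ((hgiff a b).2 h') (hab ▸ lt_irrefl _)
          · exact Subtype.ext h'
          · exact absurd ((hgiff b a).2 h') (hab ▸ lt_irrefl _)
        · intro a b
          exact hgiff a b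
    have hzB : z ∈ ⋂ β ∈ y, B β := by
      refine Set.mem_iInter₂.2 fun β hβ => ?_
      obtain ⟨i, rfl⟩ := hβ
      have hzC : z ∈ C (g i) := Set.mem_iInter₂.1 hz (g i) (hgx i)
      have hCgi : C (g i) = B (g i) \ D (g i) (hx (hgx i)) := dif_pos (hx (hgx i))
      exact (hCgi ▸ hzC).1
    have hzD : z ∈ D (αs : Ordinal) hακ := hDsub (αs : Ordinal) hακ y hyS hzB
    have hzCα : z ∈ C (αs : Ordinal) := Set.mem_iInter₂.1 hz _ hαx
    have hCα : C (αs : Ordinal) = B (αs : Ordinal) \ D (αs : Ordinal) hακ := by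
      simp only [hC, dif_pos hακ]
    exact (hCα ▸ hzCα).2 hzD
end

section
/- Suppose κ = μ⁺, λ ≥ κ, I is a nonregular κ-complete normal ideal on Z ⊆ 𝒫_κ(λ), and ℙ is a cf(μ)-c.c. forcing notion. Then in any generic extension by ℙ, the ideal generated by I is not (2,λ)-regular, provided that (cf(μ),λ)-regularity of I implies (2,λ)-regularity of I in the ground model. -/
open Cardinal Set

/-!
If the ideal generated by `I` were regular in the extension, let `C α` be the set of points `z`
that some condition forces into the `α`-th set of the refinement. The `C α` refine the `A α` and
are `I`-positive. Conditions forcing the same `z` into different refining sets are incompatible,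
so by the chain condition `z` lies in fewer than `cf μ` of the `C α`. Hence the `C α` witness the
`(cf μ, λ)`-regularity of `I` in the ground model, and so its `(2, λ)`-regularity.
-/

universe u v

theorem lift_mk_lt_of_pairwise_incompatible {P : Type u} {ι : Type v} [Preorder P]
    {c : Cardinal.{u}}
    (hcc : ∀ S : Set P, (∀ p ∈ S, ∀ q ∈ S, p ≠ q → ¬∃ r, r ≤ p ∧ r ≤ q) → #S < c)
    (f : ι → P) (hf : Pairwise fun i j => ¬∃ r, r ≤ f i ∧ r ≤ f j) :
    Cardinal.lift.{u} #ι < Cardinal.lift.{v} c := by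
  have hinj : Function.Injective f := fun i j hij => by
    by_contra hne
    exact hf hne ⟨f i, le_rfl, hij.le⟩
  have hanti : ∀ p ∈ range f, ∀ q ∈ range f, p ≠ q → ¬∃ r, r ≤ p ∧ r ≤ q := by
    rintro _ ⟨i, rfl⟩ _ ⟨j, rfl⟩ hne
    exact hf fun hij => hne (congrArg f hij)
  rw [← Cardinal.mk_range_eq_of_injective hinj, Cardinal.lift_lt]
  exact hcc _ hanti

theorem HasOtype.mk_eq {x : Set Ordinal.{0}} {a : Ordinal.{0}} (hx : HasOtype x a) :
    #x = Cardinal.lift.{1} a.card := by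
  obtain ⟨e⟩ := hx
  exact (Cardinal.mk_congr e.toEquiv).trans (Cardinal.mk_Iio_ordinal a)

theorem HasOtype.exists_eq_empty_of_incompatible {P : Type} [Preorder P] {c : Cardinal.{0}}
    (hcc : ∀ S : Set P, (∀ p ∈ S, ∀ q ∈ S, p ≠ q → ¬∃ r, r ≤ p ∧ r ≤ q) → #S < c)
    {x : Set Ordinal.{0}} (hx : HasOtype x c.ord) (N : Ordinal.{0} → Set P)
    (hN : ∀ α ∈ x, ∀ β ∈ x, α ≠ β → ∀ q r, q ∈ N α → r ∈ N β → ¬∃ s, s ≤ q ∧ s ≤ r) :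
    ∃ α ∈ x, N α = ∅ := by
  by_contra! hne
  choose f hf using fun α : x => hne α α.2
  have hlt := lift_mk_lt_of_pairwise_incompatible hcc f fun α β hαβ =>
    hN α α.2 β β.2 (Subtype.coe_ne_coe.2 hαβ) _ _ (hf α) (hf β)
  rw [hx.mk_eq, Cardinal.card_ord, Cardinal.lift_id'] at hlt
  exact hlt.false

/-- A `P`-name for a refinement is encoded as a function `B` assigning to each index `α < λ` and each
point `z` the set `B α z` of conditions forcing `z` into the `α`-th refining set. -/
theorem stmt11_general (μ lam : Cardinal.{0})
    (Z : Set (Set Ordinal.{0}))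
    (I : Set (Set (Set Ordinal.{0})))
    (hnonreg : ¬ Regular2 Z I 2 lam.ord)
    (himp : Regular2 Z I ((μ.ord.cof).ord) lam.ord → Regular2 Z I 2 lam.ord)
    (P : Type) [Preorder P]
    (hcc : ∀ S : Set P, (∀ p ∈ S, ∀ q ∈ S, p ≠ q → ¬∃ r, r ≤ p ∧ r ≤ q) →
      #S < μ.ord.cof) :
    ∀ p : P, ∃ A : Ordinal → Set (Set Ordinal.{0}),
      (∀ α < lam.ord, Pos Z I (A α)) ∧
      ¬ ∃ B : Ordinal → Set Ordinal.{0} → Set P,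
        -- all conditions mentioned lie below `p`
        (∀ α < lam.ord, ∀ z q, q ∈ B α z → q ≤ p) ∧
        -- the name for the `α`-th set names a subset of `A α`
        (∀ α < lam.ord, ∀ z, z ∉ A α → B α z = ∅) ∧
        -- the refinement is forced to be pairwise disjoint
        (∀ α β, α < lam.ord → β < lam.ord → α ≠ β →
          ∀ z q r, q ∈ B α z → r ∈ B β z → ¬∃ s, s ≤ q ∧ s ≤ r) ∧
        -- each named set is forced (below `p`) to be positive for the generated ideal:
        -- no `q ≤ p` forces it to be covered by a ground-model member of `I`
        (∀ α < lam.ord, ∀ q ≤ p, ∀ S ∈ I, ∃ z r, z ∉ S ∧ r ≤ q ∧ r ∈ B α z) := by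
  intro p
  have hnreg : ¬ Regular2 Z I μ.ord.cof.ord lam.ord := fun h => hnonreg (himp h)
  simp only [Regular2] at hnreg
  push Not at hnreg
  obtain ⟨A, hA, hfail⟩ := hnreg
  refine ⟨A, hA, ?_⟩
  rintro ⟨B, -, hBA, hdisj, hpos⟩
  set C : Ordinal.{0} → Set (Set Ordinal.{0}) := fun α => {z | (B α z).Nonempty}
  have hCA : ∀ α < lam.ord, C α ⊆ A α := fun α hα z hz => by
    by_contra hzA
    exact hz.ne_empty (hBA α hα z hzA)
  have hCpos : ∀ α < lam.ord, Pos Z I (C α) := fun α hα => by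
    refine ⟨(hCA α hα).trans (hA α hα).1, fun hCI => ?_⟩
    obtain ⟨z, r, hzC, -, hr⟩ := hpos α hα p le_rfl (C α) hCI
    exact hzC ⟨r, hr⟩
  obtain ⟨x, hxlam, hx, z, hz⟩ := hfail C fun α hα => ⟨hCA α hα, hCpos α hα⟩
  obtain ⟨α, hα, hempty⟩ := hx.exists_eq_empty_of_incompatible hcc (B · z)
    fun α hα β hβ hαβ => hdisj α β (hxlam hα) (hxlam hβ) hαβ z
  exact (mem_iInter₂.1 hz α hα).ne_empty hempty

/-- Suppose `κ = μ⁺ ≤ λ`, `I` is a nonregular `κ`-complete normal ideal on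
`Z ⊆ 𝒫_κ(λ)`, `(cf(μ),λ)`-regularity of `I` implies `(2,λ)`-regularity of `I`, and `P` is a
`cf(μ)`-c.c. forcing notion.  Then in any generic extension by `P`, the ideal generated by `I`
is not `(2,λ)`-regular.  This is formalized via `P`-names: for each condition `p` there is a
ground-model sequence of `I`-positive sets admitting no name (below `p`) for a pairwise
disjoint refinement into sets forced to be positive for the generated ideal.  Here a name for
a refinement is a function `B` assigning to each index `α < λ` and each point `z` the set
`B α z` of conditions forcing `z` into the `α`-th refining set. -/
theorem stmt11 (κ μ lam : Cardinal.{0}) (hμ : ℵ₀ ≤ μ) (hκ : κ = Order.succ μ)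
    (hκlam : κ ≤ lam)
    (Z : Set (Set Ordinal.{0})) (hZ : Z ⊆ Pkl κ lam.ord)
    (I : Set (Set (Set Ordinal.{0})))
    (hI : IdealOn Z I) (hcomp : Complete I κ) (hnorm : NormalP lam.ord Z I)
    (hnonreg : ¬ Regular2 Z I 2 lam.ord)
    (himp : Regular2 Z I ((μ.ord.cof).ord) lam.ord → Regular2 Z I 2 lam.ord)
    (P : Type) [Preorder P]
    (hcc : ∀ S : Set P, (∀ p ∈ S, ∀ q ∈ S, p ≠ q → ¬∃ r, r ≤ p ∧ r ≤ q) →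
      #S < μ.ord.cof) :
    ∀ p : P, ∃ A : Ordinal → Set (Set Ordinal.{0}),
      (∀ α < lam.ord, Pos Z I (A α)) ∧
      ¬ ∃ B : Ordinal → Set Ordinal.{0} → Set P,
        -- all conditions mentioned lie below `p`
        (∀ α < lam.ord, ∀ z q, q ∈ B α z → q ≤ p) ∧
        -- the name for the `α`-th set names a subset of `A α`
        (∀ α < lam.ord, ∀ z, z ∉ A α → B α z = ∅) ∧
        -- the refinement is forced to be pairwise disjoint
        (∀ α β, α < lam.ord → β < lam.ord → α ≠ β →
          ∀ z q r, q ∈ B α z → r ∈ B β z → ¬∃ s, s ≤ q ∧ s ≤ r) ∧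
        -- each named set is forced (below `p`) to be positive for the generated ideal:
        -- no `q ≤ p` forces it to be covered by a ground-model member of `I`
        (∀ α < lam.ord, ∀ q ≤ p, ∀ S ∈ I, ∃ z r, z ∉ S ∧ r ≤ q ∧ r ∈ B α z) :=
  stmt11_general μ lam Z I hnonreg himp P hcc
end

section
/- Suppose there is a λ-dense, κ-complete, normal ideal I on 𝒫_κ(λ) such that every I-positive set has cardinality ≥ η. Then for all μ, ν < κ, the polarized partition relation (λ⁺, λ^{<κ}) → (μ, η)_ν holds: for every coloring f : λ⁺ × λ^{<κ} → ν there exist A ⊆ λ⁺ of size μ and B ⊆ λ^{<κ} of size η such that f is constant on A × B. -/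
open Cardinal Set

/-!
For each `α < λ⁺` the colouring `f α` splits `𝒫_κ(λ)` into `ν < κ` pieces; by completeness one of
them is positive, and by density it almost contains some `D i`. There are only `λ · ν` pairs
`(i, c)`, so `μ` many `α` share the same pair. Removing the `μ < κ` null sets
`D i \ {z | f α z = c}` from `D i` leaves a positive set, hence one of size `≥ η`, on which all
these colourings take the value `c`. Points of `𝒫_κ(λ)` are coded by ordinals below `λ^{<κ}`;
normality forces `κ ≤ λ`, which gives both `|𝒫_κ(λ)| ≤ λ^{<κ}` and `λ · ν · μ < λ⁺`.
-/

namespace Complete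

variable {P : Type*} {I : Set (Set P)} {κ : Cardinal.{0}}

theorem biUnion_mem (hcomp : Complete I κ) {s : Set Ordinal.{0}} (hs : #s < lift.{1} κ)
    {g : Ordinal.{0} → Set P} (hg : ∀ i ∈ s, g i ∈ I) : ⋃ i ∈ s, g i ∈ I := by
  obtain ⟨c, hcκ, hcs⟩ := Cardinal.lt_lift_iff.1 hs
  obtain ⟨e⟩ : Nonempty (Iio c.ord ≃ s) := by
    rw [← Cardinal.eq, mk_Iio_ordinal, card_ord, hcs]
  let g' : Ordinal.{0} → Set P := fun j => if h : j ∈ Iio c.ord then g (e ⟨j, h⟩) else ∅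
  have hunion : ⋃ j ∈ Iio c.ord, g' j = ⋃ i ∈ s, g i := by
    ext z
    simp only [mem_iUnion, mem_Iio, exists_prop]
    constructor
    · rintro ⟨j, hj, hz⟩
      simp only [g', dif_pos (mem_Iio.2 hj)] at hz
      exact ⟨_, (e ⟨j, hj⟩).2, hz⟩
    · rintro ⟨i, hi, hz⟩
      refine ⟨e.symm ⟨i, hi⟩, (e.symm ⟨i, hi⟩).2, ?_⟩
      simpa only [g', dif_pos (e.symm ⟨i, hi⟩).2, Subtype.coe_eta, Equiv.apply_symm_apply]
        using hz
  rw [← hunion]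
  refine hcomp _ g' (ord_lt_ord.2 hcκ) fun j hj => ?_
  simpa only [g', dif_pos (mem_Iio.2 hj)] using hg _ (e ⟨j, hj⟩).2

end Complete

namespace IdealOn

variable {P : Type*} {Z : Set P} {I : Set (Set P)} {κ : Cardinal.{0}}

theorem pos_diff (hI : IdealOn Z I) {X N : Set P} (hX : Pos Z I X) (hN : N ∈ I) :
    Pos Z I (X \ N) :=
  ⟨sdiff_subset.trans hX.1, fun h => hX.2 (hI.mono (by simp) (hI.union h hN))⟩

theorem pos_self (hI : IdealOn Z I) : Pos Z I Z := ⟨subset_rfl, hI.proper⟩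

theorem infinite (hI : IdealOn Z I) (hcomp : Complete I κ) (hκ : κ ≠ 0) : Z.Infinite := by
  have hempty : (∅ : Set P) ∈ I := by
    simpa using
      hcomp.biUnion_mem (s := ∅) (g := fun _ => ∅) (by simpa [pos_iff_ne_zero]) (by simp)
  intro hfin
  refine hI.proper (hfin.induction_on_subset _ hempty fun {z t} hz _ _ ht => ?_)
  rw [insert_eq]
  exact hI.union (hI.nonprincipal z hz) ht

theorem exists_pos_fiber (hI : IdealOn Z I) (hcomp : Complete I κ) {s : Set Ordinal.{0}}
    (hs : #s < lift.{1} κ) {g : P → Ordinal.{0}} (hg : MapsTo g Z s) :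
    ∃ c ∈ s, Pos Z I {z ∈ Z | g z = c} := by
  by_contra! hnull
  have hcover : Z ⊆ ⋃ c ∈ s, {z ∈ Z | g z = c} := fun z hz =>
    mem_biUnion (hg hz) ⟨hz, rfl⟩
  refine hI.proper (hI.mono hcover (hcomp.biUnion_mem hs fun c hc => ?_))
  by_contra hc'
  exact hnull c hc ⟨sep_subset _ _, hc'⟩

theorem exists_pos_subset_forall_subset (hI : IdealOn Z I) (hcomp : Complete I κ) {X : Set P}
    (hX : Pos Z I X) {A : Set Ordinal.{0}} (hA : #A < lift.{1} κ) {S : Ordinal.{0} → Set P}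
    (hS : ∀ α ∈ A, X \ S α ∈ I) : ∃ T ⊆ X, Pos Z I T ∧ ∀ α ∈ A, T ⊆ S α := by
  refine ⟨X \ ⋃ α ∈ A, X \ S α, sdiff_subset, hI.pos_diff hX (hcomp.biUnion_mem hA hS), ?_⟩
  intro α hα z ⟨hzX, hz⟩
  by_contra hzS
  exact hz (mem_biUnion hα ⟨hzX, hzS⟩)

end IdealOn

theorem Cardinal.exists_le_mk_preimage_singleton {α β : Type u} (f : α → β) {c : Cardinal}
    (h : #β * c < #α) : ∃ b, c ≤ #(f ⁻¹' {b}) := by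
  by_contra! hsmall
  exact h.not_ge (mk_le_mk_mul_of_mk_preimage_le f fun b => (hsmall b).le)

theorem Set.exists_injOn_mapsTo_Iio_ord {P : Type u} {Z : Set P} {c : Cardinal.{0}}
    (h : #Z ≤ lift.{u} c) : ∃ g : P → Ordinal.{0}, InjOn g Z ∧ MapsTo g Z (Iio c.ord) := by
  classical
  obtain ⟨e⟩ : Nonempty (Z ↪ Iio c.ord) := by
    rw [← lift_mk_le', mk_Iio_ordinal, card_ord, lift_lift]
    simpa using lift_le.{1}.2 h
  refine ⟨fun z => if hz : z ∈ Z then e ⟨z, hz⟩ else 0, fun z hz z' hz' hzz' => ?_,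
    fun z hz => ?_⟩
  · simp only [dif_pos hz, dif_pos hz', Subtype.coe_inj, e.apply_eq_iff_eq] at hzz'
    exact congrArg Subtype.val hzz'
  · simpa only [dif_pos hz] using (e ⟨z, hz⟩).2

theorem IdealOn.exists_homogeneous_pos {P : Type*} {Z : Set P} {I : Set (Set P)}
    {κ lam μ ν : Cardinal.{0}} (hI : IdealOn Z I) (hcomp : Complete I κ)
    {D : Ordinal.{0} → Set P} (hDpos : ∀ i < lam.ord, Pos Z I (D i))
    (hDdense : ∀ A, Pos Z I A → ∃ i < lam.ord, D i \ A ∈ I)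
    (hlam : ℵ₀ ≤ lam) (hμ : μ < κ) (hν : ν < κ) (hμlam : μ ≤ lam) (hνlam : ν ≤ lam)
    (g : Ordinal.{0} → P → Ordinal.{0})
    (hg : ∀ α < (Order.succ lam).ord, MapsTo (g α) Z (Iio ν.ord)) :
    ∃ A ⊆ Iio (Order.succ lam).ord, #A = lift.{1} μ ∧
      ∃ T, Pos Z I T ∧ ∃ c, ∀ α ∈ A, ∀ z ∈ T, g α z = c := by
  have hcolor (α : Iio (Order.succ lam).ord) :
      ∃ p : Iio lam.ord × Iio ν.ord, D p.1 \ {z ∈ Z | g α z = p.2} ∈ I := by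
    have hνκ : #(Iio ν.ord) < lift.{1} κ := by rwa [mk_Iio_ordinal, card_ord, lift_lt]
    obtain ⟨c, hc, hpos⟩ := hI.exists_pos_fiber hcomp hνκ (hg α α.2)
    obtain ⟨i, hi, hDi⟩ := hDdense _ hpos
    exact ⟨(⟨i, hi⟩, ⟨c, hc⟩), hDi⟩
  choose p hp using hcolor
  have hcard : #(Iio lam.ord × Iio ν.ord) * lift.{1} μ < #(Iio (Order.succ lam).ord) :=
    calc #(Iio lam.ord × Iio ν.ord) * lift.{1} μ = lift.{1} (lam * ν * μ) := by
          simp [mk_prod, mk_Iio_ordinal]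
      _ ≤ lift.{1} lam := by
          refine lift_le.2 ?_
          calc lam * ν * μ ≤ lam * lam * lam := by gcongr
            _ = lam := by rw [mul_eq_self hlam, mul_eq_self hlam]
      _ < lift.{1} (Order.succ lam) := lift_lt.2 (Order.lt_succ lam)
      _ = #(Iio (Order.succ lam).ord) := by rw [mk_Iio_ordinal, card_ord]
  obtain ⟨⟨⟨i, hi⟩, ⟨c, _⟩⟩, hfiber⟩ := exists_le_mk_preimage_singleton p hcard
  obtain ⟨A, hAfiber, hA⟩ := le_mk_iff_exists_subset.1
    (hfiber.trans_eq (mk_image_eq Subtype.val_injective).symm)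
  have hAS : ∀ α ∈ A, D i \ {z ∈ Z | g α z = c} ∈ I := by
    intro α hα
    obtain ⟨β, hβ, rfl⟩ := hAfiber hα
    have hpβ : p β = _ := hβ
    simpa only [hpβ] using hp β
  obtain ⟨T, -, hT, hTS⟩ := hI.exists_pos_subset_forall_subset hcomp (hDpos i hi)
    (hA ▸ lift_lt.2 hμ) hAS
  refine ⟨A, fun α hα => ?_, hA, T, hT, c, fun α hα z hz => (hTS α hα hz).2⟩
  obtain ⟨β, -, rfl⟩ := hAfiber hα
  exact β.2

namespace Pkl

variable {κ lam : Cardinal.{0}}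

theorem aleph0_le_of_infinite (h : (Pkl κ lam.ord).Infinite) : ℵ₀ ≤ lam := by
  by_contra! hfin
  have hIio : (Iio lam.ord).Finite := by
    rw [← lt_aleph0_iff_set_finite, mk_Iio_ordinal, card_ord]
    exact lift_lt_aleph0.2 hfin
  exact h (hIio.finite_subsets.subset fun z hz => hz.1)

theorem one_lt_of_infinite (h : (Pkl κ lam.ord).Infinite) : 1 < κ := by
  by_contra! hκ
  refine h ((finite_singleton ∅).subset fun z hz => ?_)
  have hz0 : #z < 1 := hz.2.trans_le (by simpa using hκ)
  simpa [Cardinal.lt_one_iff, mk_eq_zero_iff] using hz0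

theorem le_of_normalP {I : Set (Set (Set Ordinal.{0}))} (hI : IdealOn (Pkl κ lam.ord) I)
    (hcomp : Complete I κ) (hnorm : NormalP lam.ord (Pkl κ lam.ord) I) : κ ≤ lam := by
  by_contra! hlam
  -- then `λ` itself lies in `𝒫_κ(λ)` and is the only point outside the null union of the
  -- sets `{z | x ∉ z}`, `x < λ`
  have hIio : #(Iio lam.ord) < lift.{1} κ := by
    rwa [mk_Iio_ordinal, card_ord, lift_lt]
  have hmiss := hcomp.biUnion_mem hIio fun x hx => hnorm.hat x hx
  refine (hI.pos_diff hI.pos_self hmiss).2 (hI.mono (fun z hz => ?_)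
    (hI.nonprincipal _ ⟨subset_rfl, hIio⟩))
  refine subset_antisymm hz.1.1 fun x hx => ?_
  by_contra hxz
  exact hz.2 (mem_biUnion hx ⟨hz.1, hxz⟩)

theorem mk_le_powerlt (hlam : ℵ₀ ≤ lam) (hκ : 1 < κ) (hκlam : κ ≤ lam) :
    #(Pkl κ lam.ord) ≤ lift.{1} (lam ^< κ) := by
  have hpow : lam ≤ lam ^< κ := by simpa using le_powerlt lam hκ
  let small (c : Iio κ.ord) : Set (Set Ordinal.{0}) :=
    {z | z ⊆ Iio lam.ord ∧ #z ≤ lift.{1} c.1.card}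
  have hcover : Pkl κ lam.ord ⊆ ⋃ c, small c := by
    intro z hz
    obtain ⟨c, hc, hzc⟩ := lt_lift_iff.1 hz.2
    exact mem_iUnion.2 ⟨⟨c.ord, ord_lt_ord.2 hc⟩, hz.1, by simp [hzc]⟩
  have hsmall (c : Iio κ.ord) : #(small c) ≤ lift.{1} (lam ^< κ) := by
    refine (mk_bounded_subset_le _ _).trans ?_
    rw [mk_Iio_ordinal, card_ord, max_eq_left (aleph0_le_lift.2 hlam), ← lift_power]
    exact lift_le.2 (le_powerlt lam (lt_ord.1 c.2))
  calc #(Pkl κ lam.ord) ≤ #(⋃ c, small c) := mk_le_mk_of_subset hcover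
    _ ≤ #(Iio κ.ord) * ⨆ c, #(small c) := mk_iUnion_le small
    _ ≤ lift.{1} κ * lift.{1} (lam ^< κ) := by
      rw [mk_Iio_ordinal, card_ord]
      exact mul_le_mul_right (ciSup_le' hsmall) _
    _ = lift.{1} (lam ^< κ) := by
      rw [← lift_mul,
        mul_eq_right (hlam.trans hpow) (hκlam.trans hpow) (zero_lt_one.trans hκ).ne']

end Pkl

/-- If there is a `λ`-dense `κ`-complete normal ideal `I` on `𝒫_κ(λ)` all of
whose positive sets have cardinality `≥ η`, then for all `μ, ν < κ` the polarized partition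
relation `(λ⁺, λ^{<κ}) → (μ, η)_ν` holds. -/
theorem stmt12 (κ lam η μ ν : Cardinal.{0}) (hμ : μ < κ) (hν : ν < κ)
    (Z : Set (Set Ordinal.{0})) (hZ : Z = Pkl κ lam.ord)
    (I : Set (Set (Set Ordinal.{0})))
    (hI : IdealOn Z I) (hcomp : Complete I κ) (hnorm : NormalP lam.ord Z I)
    (hdense : ∃ D : Ordinal → Set (Set Ordinal.{0}),
      (∀ i < lam.ord, Pos Z I (D i)) ∧
      ∀ A, Pos Z I A → ∃ i < lam.ord, D i \ A ∈ I)
    (hbig : ∀ A, Pos Z I A → Cardinal.lift.{1} η ≤ #↥A)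
    (f : Ordinal → Ordinal → Ordinal)
    (hf : ∀ α < (Order.succ lam).ord, ∀ β < (lam ^< κ).ord, f α β < ν.ord) :
    ∃ (A B : Set Ordinal.{0}) (c : Ordinal),
      A ⊆ Set.Iio (Order.succ lam).ord ∧ #↥A = Cardinal.lift.{1} μ ∧
      B ⊆ Set.Iio (lam ^< κ).ord ∧ #↥B = Cardinal.lift.{1} η ∧
      ∀ α ∈ A, ∀ β ∈ B, f α β = c := by
  subst hZ
  obtain ⟨D, hDpos, hDdense⟩ := hdense
  have hZinf := hI.infinite hcomp (zero_le.trans_lt hμ).ne'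
  have hlam := Pkl.aleph0_le_of_infinite hZinf
  have hκlam := Pkl.le_of_normalP hI hcomp hnorm
  obtain ⟨idx, hinj, hidx⟩ := Set.exists_injOn_mapsTo_Iio_ord
    (Pkl.mk_le_powerlt hlam (Pkl.one_lt_of_infinite hZinf) hκlam)
  obtain ⟨A, hA, hAμ, T, hT, c, hc⟩ := hI.exists_homogeneous_pos hcomp hDpos hDdense hlam hμ hν
    (hμ.le.trans hκlam) (hν.le.trans hκlam) (fun α z => f α (idx z))
    fun α hα z hz => hf α hα _ (hidx hz)
  obtain ⟨B, hBT, hBη⟩ := le_mk_iff_exists_subset.1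
    ((hbig T hT).trans_eq (mk_image_eq_of_injOn _ _ (hinj.mono hT.1)).symm)
  refine ⟨A, B, c, hA, hAμ, fun β hβ => ?_, hBη, fun α hα β hβ => ?_⟩
  · obtain ⟨z, hz, rfl⟩ := hBT hβ
    exact hidx (hT.1 hz)
  · obtain ⟨z, hz, rfl⟩ := hBT hβ
    exact hc α hα z hz
end

section
/- If I is a normal ideal on Z ⊆ 𝒫(λ) and ⟨C_α : α < λ⟩ are I-positive sets with C_α ⊆ α̂ for each α, and C = ∇_{α < λ} C_α, then: if I↾C_β is λ⁺-saturated for each β and every antichain in 𝒫(C)/I of size λ⁺ intersects some C_β in λ⁺-many positive pieces, then I↾C is λ⁺-saturated. More precisely: if ⟨D_ξ : ξ < λ⁺⟩ is an antichain below C in 𝒫(Z)/I, then there is β < λ such that C_β ∩ D_ξ ∈ I⁺ for λ⁺-many ξ, contradicting λ⁺-saturation of I↾C_β; hence if each I↾C_β is λ⁺-saturated, so is I↾C. -/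
open Cardinal Set

/-
A positive set `D` below the diagonal union `∇_α C_α` carries the regressive function sending
`z ∈ D` to some `α ∈ z` with `z ∈ C_α`; by normality it is constant, say with value `β`, on a
positive `B ⊆ D`, so `C_β ∩ D ⊇ B` is positive. Hence each member of a `λ⁺`-sequence of
positive sets below `∇_α C_α` has positive trace on some `C_β`, and since `λ⁺` is not a union of
`λ` sets of size `≤ λ`, a single `β` serves `λ⁺` members. If the sequence is an antichain, those
traces form an antichain of size `λ⁺` below `C_β`.
-/

open Order

theorem IdealOn.empty_mem {P : Type*} {Z : Set P} {I : Set (Set P)} (hI : IdealOn Z I)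
    {z : P} (hz : z ∈ Z) : ∅ ∈ I :=
  hI.mono (empty_subset _) (hI.nonprincipal z hz)

theorem IdealOn.mem_of_finite {P : Type*} {Z : Set P} {I : Set (Set P)} (hI : IdealOn Z I)
    (hempty : ∅ ∈ I) {s : Set P} (hs : s.Finite) (hsZ : s ⊆ Z) : s ∈ I := by
  induction s, hs using Set.Finite.induction_on with
  | empty => exact hempty
  | @insert a s _ _ ih =>
    rw [insert_eq]
    exact hI.union (hI.nonprincipal a (hsZ (mem_insert a s)))
      (ih ((subset_insert a s).trans hsZ))

theorem IdealOn.infinite_s16 {P : Type*} {Z : Set P} {I : Set (Set P)} (hI : IdealOn Z I)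
    (hZ : Z.Nonempty) : Z.Infinite := fun hfin =>
  hI.proper (hI.mem_of_finite (hI.empty_mem hZ.some_mem) hfin subset_rfl)

theorem aleph0_le_of_idealOn_subsets_Iio {lam : Cardinal.{0}} {I : Set (Set (Set Ordinal.{0}))}
    (hI : IdealOn {z | z ⊆ Iio lam.ord} I) : ℵ₀ ≤ lam := by
  by_contra! hfin
  have hIio : (Iio lam.ord).Finite := by
    rw [← finite_coe_iff, ← mk_lt_aleph0_iff, mk_Iio_ordinal, card_ord]
    exact lift_lt_aleph0.2 hfin
  exact hI.infinite_s16 ⟨∅, empty_subset _⟩ hIio.finite_subsets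

/-- The diagonal union `∇_{α < lam} C_α`. -/
def diagUnion (lam : Ordinal.{0}) (Z : Set (Set Ordinal.{0}))
    (C : Ordinal → Set (Set Ordinal.{0})) : Set (Set Ordinal.{0}) :=
  ⋃ α ∈ Iio lam, C α ∩ {z ∈ Z | α ∈ z}

theorem NormalP.exists_inter_not_mem_of_subset_diagUnion {lam : Ordinal.{0}}
    {Z : Set (Set Ordinal.{0})} {I : Set (Set (Set Ordinal.{0}))} (hnorm : NormalP lam Z I)
    (hI : IdealOn Z I) (hempty : ∅ ∈ I) {C : Ordinal → Set (Set Ordinal.{0})}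
    {D : Set (Set Ordinal.{0})} (hD : Pos Z I D) (hDC : D ⊆ diagUnion lam Z C) :
    ∃ β < lam, C β ∩ D ∉ I := by
  have hwitness : ∀ z ∈ D, ∃ α < lam, z ∈ C α ∧ α ∈ z := fun z hz => by
    obtain ⟨α, hα, hzC, -, hzα⟩ := mem_iUnion₂.1 (hDC hz)
    exact ⟨α, hα, hzC, hzα⟩
  choose! f hf_lt hf_mem hf_reg using hwitness
  obtain ⟨β, B, hBD, hB, hBβ⟩ := hnorm.regress D f hD hf_reg
  obtain ⟨z, hzB⟩ : B.Nonempty := nonempty_iff_ne_empty.2 fun h => hB.2 (h ▸ hempty)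
  refine ⟨β, hBβ z hzB ▸ hf_lt z (hBD hzB), fun hβ => hB.2 (hI.mono ?_ hβ)⟩
  exact fun w hw => ⟨hBβ w hw ▸ hf_mem w (hBD hw), hBD hw⟩

theorem exists_card_eq_succ_of_Iio_subset_biUnion {κ : Cardinal.{0}} (hκ : ℵ₀ ≤ κ)
    (S : Ordinal.{0} → Set Ordinal.{0}) (hS : ∀ β, S β ⊆ Iio (succ κ).ord)
    (hcover : Iio (succ κ).ord ⊆ ⋃ β ∈ Iio κ.ord, S β) :
    ∃ β < κ.ord, #(S β) = lift.{1} (succ κ) := by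
  by_contra! hsmall
  have hle : ∀ β < κ.ord, #(S β) ≤ lift.{1} κ := fun β hβ => by
    have h := (mk_le_mk_of_subset (hS β)).trans_eq (by rw [mk_Iio_ordinal, card_ord])
    rw [← lt_succ_iff, ← lift_succ]
    exact h.lt_of_ne (hsmall β hβ)
  have : lift.{1} (succ κ) ≤ lift.{1} κ :=
    calc lift.{1} (succ κ) = #(Iio (succ κ).ord) := by rw [mk_Iio_ordinal, card_ord]
      _ ≤ #(⋃ β ∈ Iio κ.ord, S β) := mk_le_mk_of_subset hcover
      _ ≤ #(Iio κ.ord) * ⨆ β : Iio κ.ord, #(S β) := mk_biUnion_le S _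
      _ ≤ lift.{1} κ * lift.{1} κ := by
        rw [mk_Iio_ordinal, card_ord]
        exact mul_le_mul_right (ciSup_le' fun β : Iio κ.ord => hle β β.2) _
      _ = lift.{1} κ := mul_eq_self (aleph0_le_lift.2 hκ)
  exact (lift_lt.2 (lt_succ κ)).not_ge this

theorem not_saturated_of_card_eq {P : Type*} {Z : Set P} {J : Set (Set P)} {δ : Cardinal.{0}}
    (S : Set Ordinal.{0}) (hS : #S = lift.{1} δ) (f : Ordinal.{0} → Set P)
    (hpos : ∀ ξ ∈ S, Pos Z J (f ξ)) (hanti : ∀ ξ ∈ S, ∀ ζ ∈ S, ξ ≠ ζ → f ξ ∩ f ζ ∈ J) :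
    ¬ Saturated Z J δ := by
  obtain ⟨e⟩ : Nonempty (Iio δ.ord ≃ S) := by rw [← Cardinal.eq, mk_Iio_ordinal, card_ord, hS]
  refine not_not.2 ⟨fun i => if h : i < δ.ord then f (e ⟨i, h⟩) else ∅, fun i hi => ?_,
    fun i j hi hj hij => ?_⟩
  · simpa only [dif_pos hi] using hpos _ (e ⟨i, hi⟩).2
  · simp only [dif_pos hi, dif_pos hj]
    refine hanti _ (e ⟨i, hi⟩).2 _ (e ⟨j, hj⟩).2 fun h => hij ?_
    exact congrArg Subtype.val (e.injective (Subtype.ext h))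

section DiagonalUnion

variable {lam : Cardinal.{0}} {Z : Set (Set Ordinal.{0})} {I : Set (Set (Set Ordinal.{0}))}
  {C : Ordinal → Set (Set Ordinal.{0})}

theorem exists_card_inter_not_mem_eq_succ (hnorm : NormalP lam.ord Z I) (hI : IdealOn Z I)
    (hempty : ∅ ∈ I) (hlam : ℵ₀ ≤ lam) (D : Ordinal → Set (Set Ordinal.{0}))
    (hD : ∀ ξ < (succ lam).ord, Pos Z I (D ξ) ∧ D ξ ⊆ diagUnion lam.ord Z C) :
    ∃ β < lam.ord, #{ξ : Ordinal.{0} | ξ < (succ lam).ord ∧ C β ∩ D ξ ∉ I} =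
      lift.{1} (succ lam) :=
  exists_card_eq_succ_of_Iio_subset_biUnion hlam _ (fun _ _ hξ => hξ.1) fun ξ hξ => by
    obtain ⟨β, hβ, hβD⟩ :=
      hnorm.exists_inter_not_mem_of_subset_diagUnion hI hempty (hD ξ hξ).1 (hD ξ hξ).2
    exact mem_biUnion hβ ⟨hξ, hβD⟩

theorem saturated_restrict_diagUnion (hnorm : NormalP lam.ord Z I) (hI : IdealOn Z I)
    (hempty : ∅ ∈ I) (hlam : ℵ₀ ≤ lam)
    (hsat : ∀ β < lam.ord, Saturated Z (restrict I (C β)) (succ lam)) :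
    Saturated Z (restrict I (diagUnion lam.ord Z C)) (succ lam) := by
  rintro ⟨f, hpos, hanti⟩
  set D : Ordinal → Set (Set Ordinal.{0}) := fun ξ => f ξ ∩ diagUnion lam.ord Z C
  have hD : ∀ ξ < (succ lam).ord, Pos Z I (D ξ) ∧ D ξ ⊆ diagUnion lam.ord Z C := fun ξ hξ =>
    ⟨⟨fun _ hz => (hpos ξ hξ).1 hz.1, (hpos ξ hξ).2⟩, inter_subset_right⟩
  obtain ⟨β, hβ, hcard⟩ := exists_card_inter_not_mem_eq_succ hnorm hI hempty hlam D hD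
  refine not_saturated_of_card_eq (J := restrict I (C β)) _ hcard D
    (fun ξ hξ => ⟨(hD ξ hξ.1).1.1, fun h => hξ.2 (by rwa [inter_comm])⟩)
    (fun ξ hξ ζ hζ hne => hI.mono ?_ (hanti ξ ζ hξ.1 hζ.1 hne)) (hsat β hβ)
  rintro z ⟨⟨⟨hzξ, hzC⟩, hzζ, -⟩, -⟩
  exact ⟨⟨hzξ, hzζ⟩, hzC⟩

end DiagonalUnion

theorem stmt16_general (lam : Cardinal.{0})
    (Z : Set (Set Ordinal.{0})) (hZ : Z = {z | z ⊆ Set.Iio lam.ord})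
    (I : Set (Set (Set Ordinal.{0})))
    (hI : IdealOn Z I) (hnorm : NormalP lam.ord Z I)
    (C : Ordinal → Set (Set Ordinal.{0})) :
    (∀ D : Ordinal → Set (Set Ordinal.{0}),
      (∀ ξ < (Order.succ lam).ord, Pos Z I (D ξ) ∧
        D ξ ⊆ ⋃ α ∈ Set.Iio lam.ord, C α ∩ {z ∈ Z | α ∈ z}) →
      (∀ ξ ζ, ξ < (Order.succ lam).ord → ζ < (Order.succ lam).ord → ξ ≠ ζ →
        D ξ ∩ D ζ ∈ I) →
      ∃ β < lam.ord,
        #↥{ξ : Ordinal.{0} | ξ < (Order.succ lam).ord ∧ C β ∩ D ξ ∉ I} =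
          Cardinal.lift.{1} (Order.succ lam)) ∧
    ((∀ β < lam.ord, Saturated Z (restrict I (C β)) (Order.succ lam)) →
      Saturated Z (restrict I (⋃ α ∈ Set.Iio lam.ord, C α ∩ {z ∈ Z | α ∈ z}))
        (Order.succ lam)) := by
  subst hZ
  have hlam := aleph0_le_of_idealOn_subsets_Iio hI
  have hempty : ∅ ∈ I := hI.empty_mem (empty_subset _)
  exact ⟨fun D hD _ => exists_card_inter_not_mem_eq_succ hnorm hI hempty hlam D hD,
    saturated_restrict_diagUnion hnorm hI hempty hlam⟩

/-- Let `I` be a normal ideal on `Z ⊆ 𝒫(λ)` and `⟨C_α : α < λ⟩` positive sets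
with `C_α ⊆ α̂`, and let `C = ∇_α C_α`.  Then: (a) for every antichain `⟨D_ξ : ξ < λ⁺⟩` below
`C` there is `β < λ` with `C_β ∩ D_ξ ∈ I⁺` for `λ⁺`-many `ξ`; hence (b) if each `I ↾ C_β` is
`λ⁺`-saturated, then `I ↾ C` is `λ⁺`-saturated. -/
theorem stmt16 (lam : Cardinal.{0})
    (Z : Set (Set Ordinal.{0})) (hZ : Z = {z | z ⊆ Set.Iio lam.ord})
    (I : Set (Set (Set Ordinal.{0})))
    (hI : IdealOn Z I) (hnorm : NormalP lam.ord Z I)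
    (C : Ordinal → Set (Set Ordinal.{0}))
    (hC : ∀ α < lam.ord, Pos Z I (C α) ∧ C α ⊆ {z ∈ Z | α ∈ z}) :
    (∀ D : Ordinal → Set (Set Ordinal.{0}),
      (∀ ξ < (Order.succ lam).ord, Pos Z I (D ξ) ∧
        D ξ ⊆ ⋃ α ∈ Set.Iio lam.ord, C α ∩ {z ∈ Z | α ∈ z}) →
      (∀ ξ ζ, ξ < (Order.succ lam).ord → ζ < (Order.succ lam).ord → ξ ≠ ζ →
        D ξ ∩ D ζ ∈ I) →
      ∃ β < lam.ord,
        #↥{ξ : Ordinal.{0} | ξ < (Order.succ lam).ord ∧ C β ∩ D ξ ∉ I} =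
          Cardinal.lift.{1} (Order.succ lam)) ∧
    ((∀ β < lam.ord, Saturated Z (restrict I (C β)) (Order.succ lam)) →
      Saturated Z (restrict I (⋃ α ∈ Set.Iio lam.ord, C α ∩ {z ∈ Z | α ∈ z}))
        (Order.succ lam)) :=
  stmt16_general lam Z hZ I hI hnorm C
end

section
/- Suppose κ = μ⁺ and I is a κ-complete ideal on κ that is nowhere δ⁺-saturated for every δ < κ (i.e., no I↾A is δ⁺-saturated). Then for every δ < κ, I is (2,δ)-regular: every sequence ⟨A_α : α < δ⟩ of I-positive sets has a pairwise disjoint I-positive refinement. -/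
open Cardinal Set

/-- If `κ = μ⁺` and `I` is a `κ`-complete ideal on `κ` that is nowhere
`δ⁺`-saturated for every `δ < κ`, then for every `δ < κ`, `I` is `(2,δ)`-regular: every
`δ`-sequence of `I`-positive sets has a pairwise disjoint `I`-positive refinement. -/
theorem stmt19 (κ μ : Cardinal.{0}) (hμ : ℵ₀ ≤ μ) (hκ : κ = Order.succ μ)
    (I : Set (Set Ordinal.{0}))
    (hI : IdealOn (Set.Iio κ.ord) I) (hcomp : Complete I κ)
    (hnosat : ∀ A, Pos (Set.Iio κ.ord) I A → ∀ δ : Cardinal.{0}, δ < κ →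
      ¬ Saturated (Set.Iio κ.ord) (restrict I A) (Order.succ δ))
    (δ : Cardinal.{0}) (hδ : δ < κ)
    (A : Ordinal → Set Ordinal.{0}) (hA : ∀ i < δ.ord, Pos (Set.Iio κ.ord) I (A i)) :
    ∃ B : Ordinal → Set Ordinal.{0},
      (∀ i < δ.ord, B i ⊆ A i ∧ Pos (Set.Iio κ.ord) I (B i)) ∧
      ∀ i j, i < δ.ord → j < δ.ord → i ≠ j → B i ∩ B j = ∅ := by
  classical
  have hμκ : μ < κ := hκ ▸ Order.lt_succ μ
  have hℵκ : ℵ₀ ≤ κ := hμ.trans hμκ.le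
  have hκ0 : (0 : Ordinal) < κ.ord := by
    rw [Cardinal.lt_ord, Ordinal.card_zero]
    exact lt_of_lt_of_le aleph0_pos hℵκ
  have hordlim : Order.IsSuccLimit κ.ord := Cardinal.isSuccLimit_ord hℵκ
  have hμord : μ.ord < κ.ord := Cardinal.ord_lt_ord.mpr hμκ
  have hδord : δ.ord < κ.ord := Cardinal.ord_lt_ord.mpr hδ
  have hempty : (∅ : Set Ordinal) ∈ I := hI.mono (empty_subset _) (hI.nonprincipal 0 hκ0)
  -- cardinality of proper initial segments is ≤ μ
  have hcardle : ∀ o : Ordinal.{0}, o < κ.ord → Cardinal.lift.{1} o.card ≤ Cardinal.lift.{1} μ := by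
    intro o ho
    have h1 : o.card < κ := Cardinal.lt_ord.mp ho
    rw [hκ] at h1
    exact Cardinal.lift_le.mpr (Order.lt_succ_iff.mp h1)
  -- bounded sets are in I
  have hsmall : ∀ γ < κ.ord, {x : Ordinal | x ≤ γ} ∈ I := by
    intro γ hγ
    have h1 : γ + 1 < κ.ord := by
      rw [Ordinal.add_one_eq_succ]; exact hordlim.succ_lt hγ
    have h2 : (⋃ i ∈ Set.Iio (γ + 1), ({i} : Set Ordinal)) ∈ I := by
      refine hcomp (γ + 1) _ h1 (fun i hi => hI.nonprincipal i (hi.trans h1))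
    refine hI.mono ?_ h2
    intro x hx
    refine Set.mem_biUnion ?_ rfl
    rw [Set.mem_Iio, Ordinal.add_one_eq_succ, Order.lt_succ_iff]
    exact hx
  -- positive sets stay positive after removing an I-set
  have hdiff : ∀ {X N : Set Ordinal}, X ∉ I → N ∈ I → X \ N ∉ I := by
    intro X N hX hN h
    refine hX (hI.mono ?_ (hI.union h hN))
    intro x hx
    by_cases h' : x ∈ N
    · exact Or.inr h'
    · exact Or.inl ⟨hx, h'⟩
  -- the Ulam matrix: injections from initial segments into μ.ord
  have hemb : ∀ β : Ordinal.{0}, β < κ.ord → Nonempty (Set.Iio β ↪ Set.Iio μ.ord) := by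
    intro β hβ
    refine (Cardinal.le_def _ _).mp ?_
    rw [Ordinal.mk_Iio_ordinal, Ordinal.mk_Iio_ordinal, Cardinal.card_ord]
    exact hcardle β hβ
  obtain ⟨g, hg1, hg2⟩ :
      ∃ g : Ordinal.{0} → Ordinal.{0} → Ordinal.{0},
        (∀ β, β < κ.ord → ∀ α, α < β → g β α < μ.ord) ∧
        (∀ β, β < κ.ord → ∀ α α', α < β → α' < β → g β α = g β α' → α = α') := by
    refine ⟨fun β α => if h : β < κ.ord ∧ α < β then ((hemb β h.1).some ⟨α, h.2⟩ : Set.Iio μ.ord).1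
      else 0, ?_, ?_⟩
    · intro β hβ α hα
      simp only [dif_pos (And.intro hβ hα)]
      exact ((hemb β hβ).some ⟨α, hα⟩).2
    · intro β hβ α α' hα hα' h
      simp only [dif_pos (And.intro hβ hα), dif_pos (And.intro hβ hα')] at h
      have := (hemb β hβ).some.injective (Subtype.ext h)
      exact congrArg Subtype.val this
  -- the cells
  set U : Ordinal → Ordinal → Set Ordinal :=
    fun η α => {β : Ordinal | β < κ.ord ∧ α < β ∧ g β α = η} with hU
  -- positive columns in a given row
  set C : Set Ordinal → Ordinal → Set Ordinal :=
    fun X η => {α : Ordinal | α < κ.ord ∧ X ∩ U η α ∉ I} with hC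
  -- step: every column has a positive row
  have hstep3 : ∀ X : Set Ordinal, X ⊆ Set.Iio κ.ord → X ∉ I →
      ∀ α < κ.ord, ∃ η < μ.ord, X ∩ U η α ∉ I := by
    intro X hXZ hXI α hα
    by_contra hcon
    push_neg at hcon
    have h1 : X \ {x | x ≤ α} ∉ I := hdiff hXI (hsmall α hα)
    refine h1 (hI.mono ?_ (hcomp μ.ord (fun η => X ∩ U η α) hμord ?_))
    · intro β hβ
      have hβκ : β < κ.ord := hXZ hβ.1
      have hαβ : α < β := not_le.mp hβ.2
      exact Set.mem_biUnion (hg1 β hβκ α hαβ) ⟨hβ.1, hβκ, hαβ, rfl⟩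
    · intro η hη
      by_contra hc
      exact hc (hcon η hη)
  -- pigeonhole: some row has a large set of positive columns
  have hrich : ∀ X : Set Ordinal, X ⊆ Set.Iio κ.ord → X ∉ I →
      ∃ η, η < μ.ord ∧ ¬ (#(C X η) ≤ Cardinal.lift.{1} μ) := by
    intro X hXZ hXI
    by_contra hcon
    push_neg at hcon
    have hcov : Set.Iio κ.ord ⊆ ⋃ η : Set.Iio μ.ord, C X η.1 := by
      intro α hα
      obtain ⟨η, hη, hpos⟩ := hstep3 X hXZ hXI α hα
      exact Set.mem_iUnion.mpr ⟨⟨η, hη⟩, hα, hpos⟩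
    have h1 : Cardinal.lift.{1} κ ≤ #(⋃ η : Set.Iio μ.ord, C X η.1) := by
      have := Cardinal.mk_le_mk_of_subset hcov
      rwa [Ordinal.mk_Iio_ordinal, Cardinal.card_ord] at this
    have h2 : #(⋃ η : Set.Iio μ.ord, C X η.1) ≤ Cardinal.lift.{1} μ := by
      refine le_trans (Cardinal.mk_iUnion_le _) ?_
      have hs : #(Set.Iio μ.ord) = Cardinal.lift.{1} μ := by
        rw [Ordinal.mk_Iio_ordinal, Cardinal.card_ord]
      calc #(Set.Iio μ.ord) * ⨆ η : Set.Iio μ.ord, #(C X η.1)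
          ≤ Cardinal.lift.{1} μ * Cardinal.lift.{1} μ := by
            refine mul_le_mul' hs.le (ciSup_le' ?_)
            intro η
            exact hcon η.1 η.2
        _ = Cardinal.lift.{1} μ := by
            rw [← Cardinal.lift_mul, Cardinal.mul_eq_self hμ]
    have h3 := (h1.trans h2)
    rw [Cardinal.lift_le] at h3
    exact absurd h3 (not_le.mpr hμκ)
  -- the minimal rich row
  set S : Set Ordinal → Set Ordinal :=
    fun X => {η | η < μ.ord ∧ ¬ (#(C X η) ≤ Cardinal.lift.{1} μ)} with hS
  set minRow : Set Ordinal → Ordinal :=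
    fun X => if h : (S X).Nonempty then Ordinal.lt_wf.min (S X) h else 0 with hminRow
  have hrowspec : ∀ X : Set Ordinal, X ⊆ Set.Iio κ.ord → X ∉ I →
      minRow X ∈ S X ∧ ∀ η < minRow X, η ∉ S X := by
    intro X h1 h2
    have hne : (S X).Nonempty := by
      obtain ⟨η, hη, hh⟩ := hrich X h1 h2
      exact ⟨η, hη, hh⟩
    constructor
    · rw [hminRow]    -- unfold
      simp only [dif_pos hne]
      exact Ordinal.lt_wf.min_mem (S X) hne
    · intro η hη hmem
      rw [hminRow] at hη
      simp only [dif_pos hne] at hη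
      exact Ordinal.lt_wf.not_lt_min (S X) hmem hη
  -- rows and bad column sets for the given sequence
  set ηf : Ordinal → Ordinal := fun i => minRow (A i) with hηf
  have hrow : ∀ i, i < δ.ord →
      (ηf i < μ.ord ∧ ¬ (#(C (A i) (ηf i)) ≤ Cardinal.lift.{1} μ)) ∧
      ∀ η < ηf i, #(C (A i) η) ≤ Cardinal.lift.{1} μ := by
    intro i hi
    obtain ⟨h1, h2⟩ := hrowspec (A i) (hA i hi).1 (hA i hi).2
    refine ⟨h1, ?_⟩
    intro η hη
    by_contra hc
    exact h2 η hη ⟨hη.trans h1.1, hc⟩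
  set W : Ordinal → Set Ordinal := fun i => C (A i) (ηf i) with hW
  set Bad : Ordinal → Set Ordinal :=
    fun i => ⋃ j : Set.Iio δ.ord, if ηf i < ηf j.1 then C (A j.1) (ηf i) else ∅ with hBad
  have hBadsmall : ∀ i, #(Bad i) ≤ Cardinal.lift.{1} μ := by
    intro i
    refine le_trans (Cardinal.mk_iUnion_le _) ?_
    have hs : #(Set.Iio δ.ord) ≤ Cardinal.lift.{1} μ := by
      rw [Ordinal.mk_Iio_ordinal, Cardinal.card_ord]
      exact Cardinal.lift_le.mpr (Order.lt_succ_iff.mp (hκ ▸ hδ))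
    have hterm : ∀ j : Set.Iio δ.ord,
        #((if ηf i < ηf j.1 then C (A j.1) (ηf i) else ∅ : Set Ordinal)) ≤
          Cardinal.lift.{1} μ := by
      intro j
      by_cases hc : ηf i < ηf j.1
      · rw [if_pos hc]
        exact (hrow j.1 j.2).2 (ηf i) hc
      · rw [if_neg hc, Cardinal.mk_emptyCollection]
        exact Cardinal.zero_le _
    refine le_trans (mul_le_mul' hs (ciSup_le' hterm)) ?_
    rw [← Cardinal.lift_mul, Cardinal.mul_eq_self hμ]
  -- the transfinite choice of columns
  obtain ⟨f, hfix⟩ :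
      ∃ f : Ordinal.{0} → Ordinal.{0}, ∀ i : Ordinal,
        ((W i \ (Bad i ∪ {x | ∃ j, ∃ _ : j < i, f j = x})).Nonempty) →
          f i ∈ W i \ (Bad i ∪ {x | ∃ j, ∃ _ : j < i, f j = x}) := by
    refine ⟨Ordinal.lt_wf.fix (fun i rec =>
      if h : (W i \ (Bad i ∪ {x | ∃ j, ∃ hj : j < i, rec j hj = x})).Nonempty then h.choose
      else 0), ?_⟩
    intro i h
    rw [WellFounded.fix_eq]
    exact dif_pos h ▸ h.choose_spec
  have hfspec : ∀ i, i < δ.ord →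
      f i ∈ W i ∧ f i ∉ Bad i ∧ ∀ j < i, f j ≠ f i := by
    intro i hi
    have hne : (W i \ (Bad i ∪ {x | ∃ j, ∃ _ : j < i, f j = x})).Nonempty := by
      by_contra hc
      rw [Set.not_nonempty_iff_eq_empty, Set.diff_eq_empty] at hc
      refine (hrow i hi).1.2 ?_
      refine le_trans (Cardinal.mk_le_mk_of_subset hc) ?_
      refine le_trans (Cardinal.mk_union_le _ _) ?_
      have hprev : #({x | ∃ j, ∃ _ : j < i, f j = x} : Set Ordinal) ≤ Cardinal.lift.{1} μ := by
        have himg : ({x | ∃ j, ∃ _ : j < i, f j = x} : Set Ordinal) = f '' Set.Iio i := by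
          ext x
          simp [Set.mem_image, Set.mem_Iio]
        rw [himg]
        refine le_trans Cardinal.mk_image_le ?_
        rw [Ordinal.mk_Iio_ordinal]
        exact hcardle i (hi.trans hδord)
      calc #(Bad i) + #({x | ∃ j, ∃ _ : j < i, f j = x} : Set Ordinal)
          ≤ Cardinal.lift.{1} μ + Cardinal.lift.{1} μ := add_le_add (hBadsmall i) hprev
        _ = Cardinal.lift.{1} μ := Cardinal.add_eq_self (Cardinal.aleph0_le_lift.mpr hμ)
    obtain ⟨h1, h2⟩ := hfix i hne
    refine ⟨h1, fun hb => h2 (Or.inl hb), ?_⟩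
    intro j hj he
    exact h2 (Or.inr ⟨j, hj, he⟩)
  -- the almost disjoint transversal
  set T : Ordinal → Set Ordinal := fun i => A i ∩ U (ηf i) (f i) with hT
  have hTpos : ∀ i, i < δ.ord → T i ∉ I := by
    intro i hi
    exact ((hfspec i hi).1).2
  have hTsub : ∀ i, T i ⊆ A i := fun i => Set.inter_subset_left
  -- pairwise almost disjointness
  have hcross : ∀ i j, i < δ.ord → j < δ.ord → ηf i < ηf j → T i ∩ T j ∈ I := by
    intro i j hi hj hij
    have hfi : f i < κ.ord := ((hfspec i hi).1).1
    have hnb := (hfspec i hi).2.1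
    have hAU : A j ∩ U (ηf i) (f i) ∈ I := by
      by_contra hc
      refine hnb ?_
      refine Set.mem_iUnion.mpr ⟨⟨j, hj⟩, ?_⟩
      rw [if_pos hij]
      exact ⟨hfi, hc⟩
    refine hI.mono ?_ hAU
    intro x hx
    exact ⟨hx.2.1, hx.1.2⟩
  have hTT : ∀ i j, i < δ.ord → j < δ.ord → i ≠ j → T i ∩ T j ∈ I := by
    intro i j hi hj hij
    rcases lt_trichotomy (ηf i) (ηf j) with h | h | h
    · exact hcross i j hi hj h
    · -- same row: distinct columns give true disjointness
      have hfij : f i ≠ f j := by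
        rcases lt_or_gt_of_ne hij with h' | h'
        · exact (hfspec j hj).2.2 i h'
        · exact fun he => (hfspec i hi).2.2 j h' he.symm
      refine hI.mono ?_ hempty
      rintro x ⟨⟨-, hx1⟩, ⟨-, hx2⟩⟩
      rw [hU] at hx1 hx2
      obtain ⟨hxκ, hfix, hgi⟩ := hx1
      obtain ⟨-, hfjx, hgj⟩ := hx2
      exact hfij (hg2 x hxκ (f i) (f j) hfix hfjx (by rw [hgi, hgj, h]))
    · have := hcross j i hj hi h
      rwa [Set.inter_comm] at this
  -- subtract the pairwise intersections
  set N : Ordinal → Set Ordinal :=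
    fun i => ⋃ j ∈ Set.Iio δ.ord, (if j = i then ∅ else T i ∩ T j) with hN
  have hNI : ∀ i, i < δ.ord → N i ∈ I := by
    intro i hi
    refine hcomp δ.ord _ hδord ?_
    intro j hj
    by_cases h : j = i
    · simpa [h] using hempty
    · simpa [h] using hTT i j hi hj (fun he => h he.symm)
  refine ⟨fun i => T i \ N i, ?_, ?_⟩
  · intro i hi
    refine ⟨(Set.diff_subset).trans (hTsub i), ?_, ?_⟩
    · exact ((Set.diff_subset).trans (hTsub i)).trans (hA i hi).1
    · exact hdiff (hTpos i hi) (hNI i hi)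
  · intro i j hi hj hij
    ext x
    simp only [Set.mem_inter_iff, Set.mem_empty_iff_false, iff_false, not_and]
    rintro ⟨hxTi, hxNi⟩ ⟨hxTj, -⟩
    refine hxNi (Set.mem_biUnion hj ?_)
    rw [if_neg (fun he : j = i => hij he.symm)]
    exact ⟨hxTi, hxTj⟩
end
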